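/- arXiv:1606.01274 — 6 statements merged into one kernel-verified Lean document; each statement's English description precedes it below -/
import Mathlib

section
/- Let z be a ≺_0-Lyndon binary word, let z'1 be a prefix of z (z' a word followed by the letter 1), let k ≥ 1, and let u be an arbitrary binary word. Then z is the longest prefix of the word z^k z' 0 u that is a ≺_0-Lyndon word; that is, every prefix of z^k z' 0 u strictly longer than z fails to be ≺_0-Lyndon, while z itself is a ≺_0-Lyndon prefix. -/
/-- The factor `w[i..j]` of `w`, with 1-based inclusive indices. -/
def factor (w : List Bool) (i j : ℕ) : List Bool :=
  (w.drop (i - 1)).take (j + 1 - i)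

/-- `p` is a period of `w` (1-based: `w[k+p] = w[k]` for `1 ≤ k ≤ |w| - p`). -/
def IsPeriod (w : List Bool) (p : ℕ) : Prop :=
  1 ≤ p ∧ ∀ k, k + p < w.length → w[k]? = w[k + p]?

/-- The least period of `w`. -/
noncomputable def leastPeriod (w : List Bool) : ℕ := sInf {p | IsPeriod w p}

/-- `p` is the least period of `w`. -/
def IsLeastPeriod (w : List Bool) (p : ℕ) : Prop :=
  IsPeriod w p ∧ ∀ q, IsPeriod w q → p ≤ q

/-- The lexicographic order `≺_c` on binary words in which the letter `c` is smaller. -/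
def LexLt (c : Bool) : List Bool → List Bool → Prop :=
  List.Lex (fun a b => a = c ∧ b = !c)

/-- `w` is a `≺_c`-Lyndon word. -/
def IsLyndon (c : Bool) (w : List Bool) : Prop :=
  w ≠ [] ∧ ∀ u v : List Bool, u ≠ [] → v ≠ [] → w = u ++ v →
    w ≠ v ++ u ∧ LexLt c w (v ++ u)

/-- `w` is primitive: it is not a power of a shorter word. -/
def Primitive (w : List Bool) : Prop :=
  w ≠ [] ∧ ∀ (u : List Bool) (k : ℕ), u.length < w.length → w ≠ (List.replicate k u).flatten

/-- `w` and `w'` are conjugate words. -/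
def Conjugate (w w' : List Bool) : Prop := ∃ u v, w = u ++ v ∧ w' = v ++ u

/-- The interval `[i..j]` (1-based) is a run of `w`. -/
def IsRun (w : List Bool) (i j : ℕ) : Prop :=
  1 ≤ i ∧ i < j ∧ j ≤ w.length ∧
  2 * leastPeriod (factor w i j) ≤ j - i + 1 ∧
  (i = 1 ∨ w[i - 2]? ≠ w[i - 2 + leastPeriod (factor w i j)]?) ∧
  (j = w.length ∨ w[j]? ≠ w[j - leastPeriod (factor w i j)]?)

/-- `c_w(i)`: the letter different from `w[i-1]` (1-based). -/
def cpar (w : List Bool) (i : ℕ) : Bool := !(w.getD (i - 2) false)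

/-- `L_w(i)`: the largest `j` such that `w[i..j]` is `≺_{c_w(i)}`-Lyndon. -/
noncomputable def Lpar (w : List Bool) (i : ℕ) : ℕ :=
  sSup {j | j ≤ w.length ∧ IsLyndon (cpar w i) (factor w i j)}

/-- `D_w(i) = L_w(i) - i + 1`. -/
noncomputable def Dpar (w : List Bool) (i : ℕ) : ℕ := Lpar w i + 1 - i

/-- `ST_w(i)`: the least `j` such that `D_w(i)` is a period of `w[j..L_w(i)]`. -/
noncomputable def STpar (w : List Bool) (i : ℕ) : ℕ :=
  sInf {j | 1 ≤ j ∧ IsPeriod (factor w j (Lpar w i)) (Dpar w i)}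

/-- `E_w(i)`: the largest `j` such that `D_w(i)` is a period of `w[i..j]`. -/
noncomputable def Epar (w : List Bool) (i : ℕ) : ℕ :=
  sSup {j | j ≤ w.length ∧ IsPeriod (factor w i j) (Dpar w i)}

/-- `R_w(i) = [ST_w(i)..E_w(i)]`. -/
noncomputable def Rmap (w : List Bool) (i : ℕ) : ℕ × ℕ := (STpar w i, Epar w i)

/-- `r_w(c)` for the run `[s..e]`: the least `i` with `R_w(i) = [s..e]` and
`w[i..L_w(i)]` a `≺_c`-Lyndon word. -/
noncomputable def rpar (w : List Bool) (s e : ℕ) (c : Bool) : ℕ :=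
  sInf {i | Rmap w i = (s, e) ∧ IsLyndon c (factor w i (Lpar w i))}

/-- `f_w([s..e])`: the letter `c` with `r_w(c) ≥ r_w(c̄)` (`0` if the least period is one). -/
noncomputable def fpar (w : List Bool) (s e : ℕ) : Bool :=
  if leastPeriod (factor w s e) = 1 then false
  else if rpar w s e false ≤ rpar w s e true then true else false

/-- The position `i` (1-based, `1 < i ≤ |w|`) is lost in `w`. -/
def Lost (w : List Bool) (i : ℕ) : Prop :=
  1 < i ∧ i ≤ w.length ∧
  ((Epar w i < w.length ∧ 1 < STpar w i ∧ ¬ IsRun w (STpar w i) (Epar w i)) ∨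
   (Epar w i < w.length ∧ IsRun w (STpar w i) (Epar w i) ∧ i + Dpar w i ≤ Epar w i) ∨
   (Epar w i = w.length ∧ IsRun w (STpar w i) (Epar w i) ∧ i + Dpar w i ≤ Epar w i ∧
     STpar w i < i ∧
     IsLyndon (fpar w (STpar w i) (Epar w i)) (factor w i (Lpar w i))))

/-- The number of lost positions of `w` that are `≤ p`. -/
noncomputable def lostCount (w : List Bool) (p : ℕ) : ℕ := {q | Lost w q ∧ q ≤ p}.ncard

/-- The prefix-frequency predicate `P_d(w)`: every lost position `p` of `w`, being the
`j`-th lost position, satisfies `p - 1 ≥ j·d`. -/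
def Pd (d : ℝ) (w : List Bool) : Prop :=
  ∀ p, Lost w p → (lostCount w p : ℝ) * d ≤ (p : ℝ) - 1

/-- The number of runs of `w`. -/
noncomputable def numRuns (w : List Bool) : ℕ := {ij : ℕ × ℕ | IsRun w ij.1 ij.2}.ncard

/-- `ρ(n)`: the maximal number of runs in a binary word of length `n`. -/
noncomputable def rho (n : ℕ) : ℕ := sSup {k | ∃ w : List Bool, w.length = n ∧ numRuns w = k}

/-- The golden ratio. -/
noncomputable def goldenRatio' : ℝ := (1 + Real.sqrt 5) / 2

/-! A prefix of `z^k z' 0 u` longer than `z` has the form `zq` with `q` a nonempty prefix of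
`z^(k-1) z' 0 u`. Peeling off copies of `z` shows `qz ≤ zq`: once `q` is a prefix of `z` this is
the Lyndon property of `z`, and once `q` reaches past the `0` the comparison is decided where
`z'0` meets the prefix `z'1` of `z`. So `zq` has a rotation not larger than itself and is not
Lyndon. -/

theorem List.prefix_append_or {α : Type*} {q a b : List α} (h : q <+: a ++ b) :
    q <+: a ∨ ∃ t, q = a ++ t ∧ t <+: b := by
  rcases le_total q.length a.length with hle | hle
  · exact .inl (List.prefix_of_prefix_length_le h (a.prefix_append b) hle)
  · obtain ⟨t, rfl⟩ := List.prefix_of_prefix_length_le (a.prefix_append b) h hle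
    exact .inr ⟨t, rfl, (List.prefix_append_right_inj a).mp h⟩

theorem List.append_le_append_left {α : Type*} [LinearOrder α] (s : List α) {t₁ t₂ : List α}
    (h : t₁ ≤ t₂) : s ++ t₁ ≤ s ++ t₂ :=
  h.lt_or_eq.elim (fun h => (List.append_left_lt h).le) (fun h => h ▸ le_rfl)

theorem lexLt_false_iff {a b : List Bool} : LexLt false a b ↔ a < b := by
  have : (fun x y : Bool => x = false ∧ y = !false) = (· < ·) := by
    funext x y; cases x <;> cases y <;> decide
  rw [LexLt, this]; rfl

theorem IsLyndon.append_le_append_of_prefix {z q : List Bool} (hz : IsLyndon false z)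
    (hq : q <+: z) : q ++ z ≤ z ++ q := by
  obtain ⟨s, rfl⟩ := hq
  rcases eq_or_ne q [] with rfl | hq
  · simp
  rcases eq_or_ne s [] with rfl | hs
  · simp
  have hrot : q ++ s < s ++ q := lexLt_false_iff.mp (hz.2 q s hq hs rfl).2
  simpa using (List.append_left_lt (l₁ := q) hrot).le

theorem IsLyndon.append_le_append_of_prefix_replicate {z z' : List Bool} (u : List Bool)
    (hz : IsLyndon false z) (hpref : z' ++ [true] <+: z) (m : ℕ) {q : List Bool}
    (hq : q <+: (List.replicate m z).flatten ++ z' ++ [false] ++ u) : q ++ z ≤ z ++ q := by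
  have hz' : z' <+: z := (z'.prefix_append [true]).trans hpref
  induction m generalizing q with
  | zero =>
    rw [List.replicate_zero, List.flatten_nil, List.nil_append, List.append_assoc] at hq
    rcases List.prefix_append_or hq with hq | ⟨t, rfl, ht⟩
    · exact hz.append_le_append_of_prefix (hq.trans hz')
    rcases List.prefix_cons_iff.mp ht with rfl | ⟨t', rfl, -⟩
    · simpa using hz.append_le_append_of_prefix hz'
    obtain ⟨s, rfl⟩ := hpref
    simp only [List.append_assoc, List.cons_append, List.nil_append]
    exact (List.append_left_lt (List.Lex.rel rfl)).le
  | succ m ih =>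
    rw [List.replicate_succ, List.flatten_cons] at hq
    simp only [List.append_assoc] at hq
    rcases List.prefix_append_or hq with hq | ⟨t, rfl, ht⟩
    · exact hz.append_le_append_of_prefix hq
    simp only [← List.append_assoc] at ht
    simpa [List.append_assoc] using List.append_le_append_left z (ih ht)

/-- If `z` is `≺_0`-Lyndon, `z'1` is a prefix of `z` and `k ≥ 1`, then `z`
is the longest `≺_0`-Lyndon prefix of `z^k z' 0 u`. -/
theorem longest_lyndon_prefix_broken_by_smaller (z z' u W : List Bool) (k : ℕ) (hk : 1 ≤ k)
    (hz : IsLyndon false z) (hpref : (z' ++ [true]) <+: z)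
    (hW : W = (List.replicate k z).flatten ++ z' ++ [false] ++ u) :
    z <+: W ∧ ∀ p : List Bool, p <+: W → z.length < p.length → ¬ IsLyndon false p := by
  obtain ⟨k, rfl⟩ : ∃ k', k = k' + 1 := ⟨k - 1, by omega⟩
  have hWz : W = z ++ ((List.replicate k z).flatten ++ z' ++ [false] ++ u) := by
    simp [hW, List.replicate_succ, List.append_assoc]
  refine ⟨hWz ▸ z.prefix_append _, fun p hp hlen hp_lyndon => ?_⟩
  rw [hWz] at hp
  rcases List.prefix_append_or hp with hpz | ⟨q, rfl, hq⟩
  · exact absurd hpz.length_le (by omega)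
  have hq_ne : q ≠ [] := by rintro rfl; simp at hlen
  have hrot : z ++ q < q ++ z := lexLt_false_iff.mp (hp_lyndon.2 z q hz.1 hq_ne rfl).2
  exact not_lt_of_ge (hz.append_le_append_of_prefix_replicate u hpref k hq) hrot
end

section
/- Let z be a ≺_0-Lyndon binary word, let z'0 be a prefix of z (z' a word followed by the letter 0), and let k ≥ 1. Then the word z^k z' 1 is a ≺_0-Lyndon word. -/
/-!
A word is `≺_c`-Lyndon once it is below each of its proper suffixes at a mismatch. Write
`z = z' c r` and `W k = z^k z' c̄`, so that `W (k+1) = z W k`, and `W (k+1)` falls below `W k`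
where `z' c` meets `z' c̄`. By induction on `k`, `W (k+1)` is below every nonempty suffix of `W k`:
a suffix `s W k` with `s` a proper suffix of `z` loses inside `z`, since `z` is below its proper
suffixes, and a suffix `t c̄` with `t` a suffix of `z'` loses because `t c r` is a suffix of `z`.
-/

/-- `LexLt c a b` without the case that `a` is a proper prefix of `b`; unlike `LexLt`, it is
preserved by appending words to both sides. -/
def MismatchLt (c : Bool) (a b : List Bool) : Prop :=
  ∃ p x y, a = p ++ c :: x ∧ b = p ++ (!c) :: y

theorem isSuffix_append_cases {v a b : List Bool} (h : v <:+ a ++ b) :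
    v <:+ b ∨ ∃ s, s <:+ a ∧ v = s ++ b := by
  obtain ⟨u, hu⟩ := h
  rcases List.append_eq_append_iff.mp hu with ⟨s, rfl, rfl⟩ | ⟨w, -, rfl⟩
  · exact Or.inr ⟨s, ⟨u, rfl⟩, rfl⟩
  · exact Or.inl ⟨w, rfl⟩

namespace MismatchLt

variable {c : Bool} {a b d : List Bool}

theorem append (h : MismatchLt c a b) (x y : List Bool) : MismatchLt c (a ++ x) (b ++ y) := by
  obtain ⟨p, a', b', rfl, rfl⟩ := h
  exact ⟨p, a' ++ x, b' ++ y, by simp, by simp⟩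

theorem irrefl (a : List Bool) : ¬ MismatchLt c a a := by
  rintro ⟨p, x, y, rfl, h⟩
  simpa using List.append_cancel_left h

theorem trans (hab : MismatchLt c a b) (hbd : MismatchLt c b d) : MismatchLt c a d := by
  obtain ⟨p, x, y, rfl, rfl⟩ := hab
  obtain ⟨q, x', y', hq, rfl⟩ := hbd
  rcases List.append_eq_append_iff.mp hq with ⟨w, rfl, hw⟩ | ⟨w, rfl, hw⟩
  · cases w with
    | nil => simp at hw
    | cons e w =>
      obtain ⟨rfl, rfl⟩ := List.cons.inj hw
      exact ⟨p, x, w ++ (!c) :: y', rfl, by simp⟩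
  · cases w with
    | nil => simp at hw
    | cons e w =>
      obtain ⟨rfl, rfl⟩ := List.cons.inj hw
      exact ⟨q, w ++ c :: x, y', by simp, rfl⟩

theorem lexLt (h : MismatchLt c a b) : LexLt c a b := by
  obtain ⟨p, x, y, rfl, rfl⟩ := h
  exact List.Lex.append_left _ (List.Lex.rel ⟨rfl, rfl⟩) p

theorem of_lexLt (h : LexLt c a b) (hlen : b.length ≤ a.length) : MismatchLt c a b := by
  induction h with
  | nil => simp at hlen
  | cons _ ih =>
    obtain ⟨p, x, y, rfl, rfl⟩ := ih (by simpa using hlen)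
    exact ⟨_ :: p, x, y, rfl, rfl⟩
  | rel h =>
    obtain ⟨rfl, rfl⟩ := h
    exact ⟨[], _, _, rfl, rfl⟩

theorem of_append_left {p : List Bool} (h : MismatchLt c (p ++ a) (p ++ b)) :
    MismatchLt c a b := by
  induction p with
  | nil => simpa using h
  | cons e p ih =>
    obtain ⟨q, x, y, hx, hy⟩ := h
    cases q with
    | nil =>
      simp only [List.nil_append, List.cons_append, List.cons.injEq] at hx hy
      simp [← hx.1] at hy
    | cons _ q =>
      simp only [List.cons_append, List.cons.injEq] at hx hy
      exact ih ⟨q, x, y, hx.2, hy.2⟩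

theorem of_append_right_or_prefix (h : MismatchLt c a (b ++ d)) :
    MismatchLt c a b ∨ b <+: a := by
  obtain ⟨p, x, y, rfl, hb⟩ := h
  rcases List.append_eq_append_iff.mp hb with ⟨w, rfl, -⟩ | ⟨w, rfl, hw⟩
  · exact Or.inr ⟨w ++ c :: x, by simp⟩
  · cases w with
    | nil => exact Or.inr ⟨c :: x, by simp⟩
    | cons e w =>
      obtain ⟨rfl, -⟩ := List.cons.inj hw
      exact Or.inl ⟨p, x, w, rfl, rfl⟩

theorem of_append_singleton (h : MismatchLt c a (b ++ [c])) : MismatchLt c a b := by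
  obtain ⟨p, x, y, rfl, hb⟩ := h
  rcases List.append_eq_append_iff.mp hb with ⟨w, -, hw⟩ | ⟨w, rfl, hw⟩
  · cases w with
    | nil => simp at hw
    | cons e w => simpa using congrArg List.length hw
  · cases w with
    | nil => simp at hw
    | cons e w =>
      obtain ⟨rfl, -⟩ := List.cons.inj hw
      exact ⟨p, x, w, rfl, rfl⟩

end MismatchLt

namespace IsLyndon

variable {c : Bool} {z : List Bool}

theorem mismatchLt_rotate (hz : IsLyndon c z) {u v : List Bool} (hu : u ≠ []) (hv : v ≠ [])
    (huv : z = u ++ v) : MismatchLt c z (v ++ u) :=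
  .of_lexLt (hz.2 u v hu hv huv).2 (by simp [huv, Nat.add_comm])

theorem mismatchLt_of_isSuffix (hz : IsLyndon c z) {s : List Bool} (hs : s <:+ z)
    (hs0 : s ≠ []) (hsz : s ≠ z) : MismatchLt c z s := by
  obtain ⟨u, rfl⟩ := hs
  have hu : u ≠ [] := by rintro rfl; exact hsz rfl
  have hrot := hz.mismatchLt_rotate hu hs0 rfl
  rcases hrot.of_append_right_or_prefix with h | ⟨m, hm⟩
  · exact h
  · -- `s` is a border, `u ++ s = s ++ m`: the two rotations compare in opposite directions.
    have hm0 : m ≠ [] := by rintro rfl; simp_all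
    have hmu : MismatchLt c m u := .of_append_left (p := s) (by rwa [hm])
    exact (MismatchLt.irrefl _ ((hz.mismatchLt_rotate hs0 hm0 hm.symm).trans (hmu.append s s))).elim

theorem mismatchLt_or_prefix_of_isSuffix (hz : IsLyndon c z) {t r : List Bool}
    (ht : t ++ c :: r <:+ z) : MismatchLt c z t ∨ t ++ [c] <+: z := by
  by_cases he : t ++ c :: r = z
  · exact Or.inr ⟨r, by rw [← he]; simp⟩
  · have h := hz.mismatchLt_of_isSuffix ht (by simp) he
    rw [show t ++ c :: r = t ++ [c] ++ r by simp] at h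
    exact h.of_append_right_or_prefix.imp_left MismatchLt.of_append_singleton

end IsLyndon

theorem isLyndon_of_forall_mismatchLt {c : Bool} {w : List Bool} (hw : w ≠ [])
    (h : ∀ v, v <:+ w → v ≠ [] → v ≠ w → MismatchLt c w v) : IsLyndon c w := by
  refine ⟨hw, fun u v hu hv huv => ?_⟩
  have hvw : v ≠ w := by rintro rfl; exact hu (by simpa using huv)
  have hlt : MismatchLt c w (v ++ u) := by
    simpa using (h v ⟨u, huv.symm⟩ hv hvw).append [] u
  exact ⟨fun he => MismatchLt.irrefl _ (he ▸ hlt), hlt.lexLt⟩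

/-- `z^k z' c̄`: the prefix `z' c` of a further copy of `z` with its last letter raised. -/
def brokenPower (c : Bool) (z z' : List Bool) (k : ℕ) : List Bool :=
  (List.replicate k z).flatten ++ z' ++ [!c]

section BrokenPower

variable {c : Bool} {z z' r : List Bool}

theorem brokenPower_succ (k : ℕ) : brokenPower c z z' (k + 1) = z ++ brokenPower c z z' k := by
  simp [brokenPower, List.replicate_succ]

theorem mismatchLt_brokenPower_succ (hzr : z = z' ++ c :: r) (k : ℕ) :
    MismatchLt c (brokenPower c z z' (k + 1)) (brokenPower c z z' k) :=
  ⟨(List.replicate k z).flatten ++ z', r ++ z' ++ [!c], [],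
    by simp [brokenPower, List.replicate_succ', hzr], by simp [brokenPower]⟩

theorem brokenPower_one_mismatchLt (hz : IsLyndon c z) (hzr : z = z' ++ c :: r) {v : List Bool}
    (hv : v <:+ brokenPower c z z' 0) (hv0 : v ≠ []) :
    MismatchLt c (brokenPower c z z' 1) v := by
  obtain ⟨t, rfl, ht⟩ :=
    (List.suffix_concat_iff.mp (by simpa [brokenPower] using hv)).resolve_left hv0
  have htz : t ++ c :: r <:+ z := hzr ▸ List.suffix_append_self_iff.mpr ht
  rw [brokenPower_succ]
  rcases hz.mismatchLt_or_prefix_of_isSuffix htz with h | ⟨m, hm⟩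
  · exact h.append _ _
  · exact ⟨t, m ++ brokenPower c z z' 0, [], by rw [← hm]; simp, rfl⟩

theorem isSuffix_brokenPower_succ_cases (hz : IsLyndon c z) {k : ℕ} {v : List Bool}
    (hv : v <:+ brokenPower c z z' (k + 1)) :
    v = brokenPower c z z' (k + 1) ∨ MismatchLt c (brokenPower c z z' (k + 1)) v ∨
      v <:+ brokenPower c z z' k := by
  rw [brokenPower_succ] at hv ⊢
  rcases isSuffix_append_cases hv with h | ⟨s, hs, rfl⟩
  · exact Or.inr (Or.inr h)
  · by_cases hs0 : s = []
    · simp [hs0]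
    by_cases hsz : s = z
    · exact Or.inl (by rw [hsz])
    · exact Or.inr (Or.inl ((hz.mismatchLt_of_isSuffix hs hs0 hsz).append _ _))

theorem brokenPower_succ_mismatchLt (hz : IsLyndon c z) (hzr : z = z' ++ c :: r) :
    ∀ k {v : List Bool}, v <:+ brokenPower c z z' k → v ≠ [] →
      MismatchLt c (brokenPower c z z' (k + 1)) v
  | 0, _, hv, hv0 => brokenPower_one_mismatchLt hz hzr hv hv0
  | k + 1, v, hv, hv0 => by
    have hdrop := mismatchLt_brokenPower_succ hzr (k + 1)
    rcases isSuffix_brokenPower_succ_cases hz hv with rfl | h | h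
    · exact hdrop
    · exact hdrop.trans h
    · exact hdrop.trans (brokenPower_succ_mismatchLt hz hzr k h hv0)

theorem isLyndon_brokenPower (hz : IsLyndon c z) (hzr : z = z' ++ c :: r) (k : ℕ) :
    IsLyndon c (brokenPower c z z' (k + 1)) := by
  refine isLyndon_of_forall_mismatchLt (by simp [brokenPower]) fun v hv hv0 hvW => ?_
  rcases isSuffix_brokenPower_succ_cases hz hv with h | h | h
  · exact absurd h hvW
  · exact h
  · exact brokenPower_succ_mismatchLt hz hzr k h hv0

end BrokenPower

/-- If `z` is `≺_0`-Lyndon, `z'0` is a prefix of `z` and `k ≥ 1`, then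
`z^k z' 1` is a `≺_0`-Lyndon word. -/
theorem lyndon_broken_by_greater (z z' : List Bool) (k : ℕ) (hk : 1 ≤ k)
    (hz : IsLyndon false z) (hpref : (z' ++ [false]) <+: z) :
    IsLyndon false ((List.replicate k z).flatten ++ z' ++ [true]) := by
  obtain ⟨r, hr⟩ := hpref
  obtain ⟨j, rfl⟩ := Nat.exists_eq_add_of_le' hk
  exact isLyndon_brokenPower hz (r := r) (by rw [← hr]; simp) j
end

section
/- Let w be a binary word and let r be a run of w. Then there exists a position i with 1 < i ≤ |w| such that R_w(i) = r, i.e., every run of w lies in the range of the map R_w. -/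
theorem List.Lex.append_of_length_eq {α : Type*} {r : α → α → Prop} {l₁ l₂ : List α}
    (hl : l₁.length = l₂.length) (h : List.Lex r l₁ l₂) (m₁ m₂ : List α) :
    List.Lex r (l₁ ++ m₁) (l₂ ++ m₂) := by
  induction h with
  | nil => simp at hl
  | cons _ ih => exact .cons (ih (by simpa using hl))
  | rel h => exact .rel h

theorem List.Lex.of_append_left {α : Type*} {r : α → α → Prop} [Std.Irrefl r]
    {s l₁ l₂ : List α} (h : List.Lex r (s ++ l₁) (s ++ l₂)) : List.Lex r l₁ l₂ := by
  induction s with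
  | nil => exact h
  | cons a s ih => exact ih (List.lex_cons_iff.mp h)

-- The letter order underlying `LexLt c`; Mathlib lifts both instances to `List.Lex`.
instance (c : Bool) : Std.Asymm (fun a b : Bool => a = c ∧ b = !c) where
  asymm a b h h' := by cases c <;> simp_all

instance (c : Bool) : Std.Trichotomous (fun a b : Bool => a = c ∧ b = !c) where
  trichotomous a b h h' := by cases a <;> cases b <;> cases c <;> simp_all

section LexLt

variable {c : Bool} {l₁ l₂ l₃ : List Bool}

theorem lexLt_asymm (h : LexLt c l₁ l₂) : ¬ LexLt c l₂ l₁ := asymm_of (List.Lex _) h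

theorem lexLt_irrefl (l : List Bool) : ¬ LexLt c l l := irrefl_of (List.Lex _) l

theorem lexLt_trans (h₁ : LexLt c l₁ l₂) (h₂ : LexLt c l₂ l₃) : LexLt c l₁ l₃ :=
  List.lex_trans (by simp_all) h₁ h₂

theorem eq_or_lexLt_of_not_lexLt (h : ¬ LexLt c l₂ l₁) : l₁ = l₂ ∨ LexLt c l₁ l₂ := by
  by_contra! h'
  exact h'.1 (Std.Trichotomous.trichotomous (r := List.Lex _) _ _ h'.2 h)

theorem lexLt_of_getElem? {m : ℕ} (hpre : ∀ m' < m, l₁[m']? = l₂[m']?)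
    (h₁ : l₁[m]? = some c) (h₂ : l₂[m]? = some !c) : LexLt c l₁ l₂ := by
  induction m generalizing l₁ l₂ with
  | zero =>
    cases l₁ <;> cases l₂ <;> simp only [List.getElem?_nil, reduceCtorEq,
      List.getElem?_cons_zero, Option.some.injEq] at h₁ h₂
    exact .rel ⟨h₁, h₂⟩
  | succ m ih =>
    cases l₁ <;> cases l₂ <;> simp only [List.getElem?_nil, reduceCtorEq,
      List.getElem?_cons_succ] at h₁ h₂
    obtain rfl := by simpa using hpre 0 (by omega)
    exact .cons (ih (fun m' hm' => by simpa using hpre (m' + 1) (by omega)) h₁ h₂)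

theorem not_lexLt_append_singleton_cons (l : List Bool) : ¬ LexLt c (l ++ [c]) (c :: l) := by
  induction l with
  | nil => exact lexLt_irrefl _
  | cons a l ih =>
    rw [LexLt, List.cons_append, List.cons_lex_cons_iff]
    rintro (⟨-, h⟩ | ⟨rfl, h⟩)
    · cases a <;> simp at h
    · exact ih h

end LexLt

section IsPeriod

variable {v : List Bool} {p : ℕ}

theorem isLeast_leastPeriod (v : List Bool) : IsLeast {p | IsPeriod v p} (leastPeriod v) :=
  ⟨Nat.sInf_mem ⟨v.length + 1, by omega, fun _ _ => by omega⟩, fun _ hq => Nat.sInf_le hq⟩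

theorem IsPeriod.drop_take (h : IsPeriod v p) (a b : ℕ) : IsPeriod ((v.drop a).take b) p := by
  refine ⟨h.1, fun m hm => ?_⟩
  simp only [List.length_take, List.length_drop] at hm
  rw [List.getElem?_take_of_lt (by omega), List.getElem?_take_of_lt (by omega),
    List.getElem?_drop, List.getElem?_drop, ← add_assoc]
  exact h.2 _ (by omega)

theorem IsPeriod.getElem?_eq_take_mod (h : IsPeriod v p) {m : ℕ} (hm : m < v.length) :
    v[m]? = (v.take p)[m % p]? := by
  induction m using Nat.strong_induction_on with
  | _ m ih =>
    rcases lt_or_ge m p with hmp | hmp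
    · rw [Nat.mod_eq_of_lt hmp, List.getElem?_take_of_lt hmp]
    · have hp := h.1
      have hshift := h.2 (m - p) (by omega)
      rw [Nat.sub_add_cancel hmp] at hshift
      rw [← hshift, ih (m - p) (by omega) (by omega), Nat.mod_eq_sub_mod hmp]

theorem IsPeriod.getElem?_eq_of_mod_eq (h : IsPeriod v p) {m m' : ℕ} (hm : m < v.length)
    (hm' : m' < v.length) (hmod : m % p = m' % p) : v[m]? = v[m']? := by
  rw [h.getElem?_eq_take_mod hm, h.getElem?_eq_take_mod hm', hmod]

theorem IsPeriod.drop_take_eq_rotate (h : IsPeriod v p) {t : ℕ} (ht : t + p ≤ v.length) :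
    (v.drop t).take p = (v.take p).rotate t := by
  have hu : (v.take p).length = p := by simp; omega
  apply List.ext_getElem?
  intro m
  rcases lt_or_ge m p with hm | hm
  · rw [List.getElem?_take_of_lt hm, List.getElem?_drop, List.getElem?_rotate (by omega), hu,
      h.getElem?_eq_take_mod (by omega), add_comm]
  · rw [List.getElem?_eq_none (by simp; omega), List.getElem?_eq_none (by simp; omega)]

theorem IsPeriod.of_rotate_take_eq (h : IsPeriod v p) (hpv : p ≤ v.length) {g : ℕ} (hg : 1 ≤ g)
    (hrot : (v.take p).rotate g = v.take p) : IsPeriod v g := by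
  refine ⟨hg, fun m hm => ?_⟩
  have hu : (v.take p).length = p := by simp; omega
  rw [h.getElem?_eq_take_mod (m := m) (by omega), h.getElem?_eq_take_mod hm]
  conv_lhs => rw [← hrot]
  rw [List.getElem?_rotate (by rw [hu]; exact Nat.mod_lt _ h.1), hu, Nat.mod_add_mod]

theorem IsPeriod.drop_isPrefix (h : IsPeriod v p) : v.drop p <+: v := by
  rw [List.prefix_iff_eq_take]
  apply List.ext_getElem?
  intro m
  rcases lt_or_ge m (v.length - p) with hm | hm
  · rw [List.getElem?_drop, List.getElem?_take_of_lt (by simp; omega), add_comm]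
    exact (h.2 m (by omega)).symm
  · rw [List.getElem?_eq_none (by simp; omega), List.getElem?_eq_none (by simp; omega)]

end IsPeriod

section IsLyndon

variable {c : Bool} {l : List Bool}

theorem IsLyndon.getLast?_eq (h : IsLyndon c l) (hl : 2 ≤ l.length) : l.getLast? = some !c := by
  obtain ⟨x, b, rfl⟩ : ∃ x b, l = x ++ [b] :=
    ⟨l.dropLast, l.getLast (by rintro rfl; simp at hl), (List.dropLast_append_getLast _).symm⟩
  have hx : x ≠ [] := by rintro rfl; simp at hl
  have hlt := (h.2 x [b] hx (by simp) rfl).2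
  rw [List.getLast?_append_of_ne_nil _ (by simp), List.getLast?_singleton, Option.some.injEq]
  rcases Bool.eq_or_eq_not b c with rfl | rfl
  · exact absurd hlt (not_lexLt_append_singleton_cons x)
  · rfl

theorem IsLyndon.not_isPrefix_of_append {x y : List Bool} (h : IsLyndon c (x ++ y))
    (hx : x ≠ []) (hy : y ≠ []) : ¬ y <+: x ++ y := by
  rintro ⟨z, hyz⟩
  have hlen : z.length = x.length := by
    have := congrArg List.length hyz
    simp only [List.length_append] at this
    omega
  have hz : z ≠ [] := by rw [← List.length_pos_iff] at hx ⊢; omega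
  have hzx : LexLt c z x := by
    have hlt := (h.2 x y hx hy rfl).2
    rw [← hyz] at hlt
    exact List.Lex.of_append_left hlt
  exact lexLt_asymm (h.2 y z hy hz hyz.symm).2 (hzx.append_of_length_eq hlen y y)

theorem IsLyndon.not_isPeriod (h : IsLyndon c l) {p : ℕ} (hp : IsPeriod l p)
    (hpl : p < l.length) : False := by
  have hp1 := hp.1
  rw [← List.take_append_drop p l] at h
  exact h.not_isPrefix_of_append (List.ne_nil_of_length_pos (by simp; omega))
    (List.ne_nil_of_length_pos (by simp; omega))
    ((List.take_append_drop p l).symm ▸ hp.drop_isPrefix)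

theorem not_isLyndon_of_isPeriod_take {n p : ℕ} (hp : IsPeriod (l.take n) p) (hpn : p ≤ n)
    (hn : l[n]? = some c) (hnp : l[n - p]? = some !c) : ¬ IsLyndon c l := by
  intro h
  have hp1 := hp.1
  have hnl : n < l.length := by
    by_contra! hnl
    simp [List.getElem?_eq_none hnl] at hn
  refine lexLt_asymm (h.2 _ _ (List.ne_nil_of_length_pos (by simp; omega))
    (List.ne_nil_of_length_pos (by simp; omega)) (List.take_append_drop p l).symm).2
    (lexLt_of_getElem? (m := n - p) (fun m hm => ?_) ?_ hnp)
  · have hshift := hp.2 m (by simp; omega)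
    rw [List.getElem?_take_of_lt (by omega), List.getElem?_take_of_lt (by omega)] at hshift
    rw [List.getElem?_append_left (by simp; omega), List.getElem?_drop, hshift, add_comm]
  · rw [List.getElem?_append_left (by simp; omega), List.getElem?_drop, Nat.add_sub_cancel' hpn,
      hn]

theorem exists_forall_not_lexLt_rotate (c : Bool) (hl : l ≠ []) :
    ∃ t < l.length, ∀ s, ¬ LexLt c (l.rotate s) (l.rotate t) := by
  let R : Fin l.length → Fin l.length → Prop := fun s t => LexLt c (l.rotate s) (l.rotate t)
  have : IsTrans _ R := ⟨fun _ _ _ => lexLt_trans⟩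
  have : Std.Irrefl R := ⟨fun _ => lexLt_irrefl _⟩
  obtain ⟨t, -, ht⟩ := (Finite.wellFounded_of_trans_of_irrefl R).has_min Set.univ
    ⟨⟨0, List.length_pos_of_ne_nil hl⟩, trivial⟩
  refine ⟨t, t.2, fun s => ?_⟩
  rw [← List.rotate_mod]
  exact ht ⟨s % l.length, Nat.mod_lt _ (List.length_pos_of_ne_nil hl)⟩ trivial

theorem isLyndon_rotate_of_forall_not_lexLt (hl : l ≠ [])
    (hprim : ∀ g, 0 < g → g < l.length → l.rotate g ≠ l) {t : ℕ}
    (hmin : ∀ s, ¬ LexLt c (l.rotate s) (l.rotate t)) : IsLyndon c (l.rotate t) := by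
  refine ⟨by simpa using hl, fun u v hu hv huv => ?_⟩
  have hvu : v ++ u = l.rotate (t + u.length) := by
    rw [← List.rotate_rotate, huv, List.rotate_append_length_eq]
  have hne : l.rotate t ≠ v ++ u := by
    rw [hvu, add_comm, ← List.rotate_rotate]
    intro heq
    have hlen := congrArg List.length huv
    simp only [List.length_rotate, List.length_append] at hlen
    exact hprim u.length (List.length_pos_iff.mpr hu)
      (by have := List.length_pos_iff.mpr hv; omega) (List.rotate_eq_rotate.mp heq).symm
  exact ⟨hne, (eq_or_lexLt_of_not_lexLt (hvu ▸ hmin _)).resolve_left hne⟩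

theorem exists_isLyndon_rotate (c : Bool) (hl : l ≠ [])
    (hprim : ∀ g, 0 < g → g < l.length → l.rotate g ≠ l) :
    ∃ t, 0 < t ∧ t ≤ l.length ∧ IsLyndon c (l.rotate t) := by
  obtain ⟨t, ht, hmin⟩ := exists_forall_not_lexLt_rotate c hl
  have hlyn := isLyndon_rotate_of_forall_not_lexLt hl hprim hmin
  rcases Nat.eq_zero_or_pos t with rfl | ht0
  · refine ⟨l.length, List.length_pos_of_ne_nil hl, le_rfl, ?_⟩
    rwa [List.rotate_length, ← List.rotate_zero l]
  · exact ⟨t, ht0, ht.le, hlyn⟩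

end IsLyndon

section Factor

variable {w : List Bool} {i j k m p : ℕ}

theorem getElem?_factor (hm : m < j + 1 - i) : (factor w i j)[m]? = w[i - 1 + m]? := by
  rw [factor, List.getElem?_take_of_lt hm, List.getElem?_drop]

theorem length_factor (hi : 1 ≤ i) (hj : j ≤ w.length) : (factor w i j).length = j + 1 - i := by
  simp only [factor, List.length_take, List.length_drop]
  omega

theorem take_factor (hjm : j ≤ m) : (factor w i m).take (j + 1 - i) = factor w i j := by
  simp only [factor, List.take_take]
  congr 1
  omega

theorem factor_eq_drop_take (hi : 1 ≤ i) (hik : i ≤ k) (hmj : m ≤ j) :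
    factor w k m = ((factor w i j).drop (k - i)).take (m + 1 - k) := by
  simp only [factor, List.drop_take, List.drop_drop, List.take_take]
  congr 2 <;> omega

theorem isPeriod_factor_iff (hi : 1 ≤ i) (hj : j ≤ w.length) :
    IsPeriod (factor w i j) p ↔ 1 ≤ p ∧ ∀ a, i ≤ a + 1 → a + p < j → w[a]? = w[a + p]? := by
  rw [IsPeriod, length_factor hi hj]
  refine and_congr_right fun _ => ⟨fun h a ha hap => ?_, fun h m hm => ?_⟩
  · have hshift := h (a + 1 - i) (by omega)
    rwa [getElem?_factor (by omega), getElem?_factor (by omega),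
      show i - 1 + (a + 1 - i) = a by omega, show i - 1 + (a + 1 - i + p) = a + p by omega]
      at hshift
  · rw [getElem?_factor (by omega), getElem?_factor (by omega), ← add_assoc]
    exact h _ (by omega) (by omega)

theorem IsPeriod.factor_of_le (h : IsPeriod (factor w i j) p) (hi : 1 ≤ i) (hik : i ≤ k)
    (hmj : m ≤ j) : IsPeriod (factor w k m) p := by
  rw [factor_eq_drop_take hi hik hmj]
  exact h.drop_take _ _

theorem IsPeriod.factor_eq_rotate (h : IsPeriod (factor w i j) p) (hi : 1 ≤ i)
    (hj : j ≤ w.length) {t : ℕ} (ht : i + t + p ≤ j + 1) :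
    factor w (i + t) (i + t + p - 1) = ((factor w i j).take p).rotate t := by
  rw [factor_eq_drop_take hi (by omega) (show i + t + p - 1 ≤ j by omega),
    show i + t + p - 1 + 1 - (i + t) = p by omega, Nat.add_sub_cancel_left,
    h.drop_take_eq_rotate (by rw [length_factor hi hj]; omega)]

end Factor

section Rmap

variable {w : List Bool} {i j k p : ℕ}

theorem exists_isLyndon_factor (c : Bool) (hi : 1 ≤ i) (hj : j ≤ w.length)
    (hp : IsLeast {q | IsPeriod (factor w i j) q} p) (h2p : 2 * p ≤ j + 1 - i) :
    ∃ k, i < k ∧ k ≤ i + p ∧ IsLyndon c (factor w k (k + p - 1)) := by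
  have hper : IsPeriod (factor w i j) p := hp.1
  have hp1 := hper.1
  have hv := length_factor hi hj
  have hu : ((factor w i j).take p).length = p := by simp; omega
  obtain ⟨t, ht, htp, hlyn⟩ := exists_isLyndon_rotate c (List.ne_nil_of_length_pos (by omega))
    fun g hg hgp hrot => absurd (hp.2 (hper.of_rotate_take_eq (by omega) hg hrot)) (by omega)
  exact ⟨i + t, by omega, by omega, by rwa [hper.factor_eq_rotate hi hj (by omega)]⟩

theorem cpar_eq_of_isLyndon {a : Bool} (hi : 1 ≤ i) (hj : j ≤ w.length)
    (hper : IsPeriod (factor w i j) p) (hik : i < k) (hkp : k + p ≤ j + 1)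
    (ha : w[j - p]? = some a) (hlyn : IsLyndon (!a) (factor w k (k + p - 1))) :
    cpar w k = !a := by
  suffices w[k - 2]? = some a by simp [cpar, List.getD_eq_getElem?_getD, this]
  have hv := length_factor hi hj
  rcases hper.1.eq_or_lt with hp1 | hp2
  · have hconst := hper.getElem?_eq_of_mod_eq (m := k - 1 - i) (m' := j - i) (by omega)
      (by omega) (by rw [← hp1, Nat.mod_one, Nat.mod_one])
    rwa [getElem?_factor (by omega), getElem?_factor (by omega),
      show i - 1 + (k - 1 - i) = k - 2 by omega, show i - 1 + (j - i) = j - p by omega, ha]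
      at hconst
  · have hlast := hlyn.getLast?_eq (by rw [length_factor (by omega) (by omega)]; omega)
    rw [List.getLast?_eq_getElem?, length_factor (by omega) (by omega),
      getElem?_factor (by omega), Bool.not_not,
      show k - 1 + (k + p - 1 + 1 - k - 1) = k - 2 + p by omega] at hlast
    rw [((isPeriod_factor_iff hi hj).mp hper).2 (k - 2) (by omega) (by omega), hlast]

theorem lpar_eq {a : Bool} (hk : 1 ≤ k) (hj : j ≤ w.length) (hper : IsPeriod (factor w k j) p)
    (hkp : k + p ≤ j + 1) (ha : w[j - p]? = some a)
    (hright : j = w.length ∨ w[j]? ≠ w[j - p]?) (hc : cpar w k = !a)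
    (hlyn : IsLyndon (!a) (factor w k (k + p - 1))) : Lpar w k = k + p - 1 := by
  rw [Lpar, hc]
  refine IsGreatest.csSup_eq ⟨⟨by omega, hlyn⟩, fun m ⟨hm, hlyn'⟩ => ?_⟩
  by_contra! hkm
  rcases le_or_gt m j with hmj | hjm
  · exact hlyn'.not_isPeriod (hper.factor_of_le hk le_rfl hmj)
      (by rw [length_factor hk hm]; omega)
  · have hjw : j < w.length := by omega
    refine not_isLyndon_of_isPeriod_take (n := j + 1 - k) (p := p) ?_ (by omega) ?_ ?_ hlyn'
    · rwa [take_factor hjm.le]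
    · rw [getElem?_factor (by omega), show k - 1 + (j + 1 - k) = j by omega,
        List.getElem?_eq_getElem hjw, Option.some.injEq, Bool.eq_not]
      intro heq
      exact hright.resolve_left hjw.ne (by rw [List.getElem?_eq_getElem hjw, heq, ha])
    · rwa [getElem?_factor (by omega), show k - 1 + (j + 1 - k - p) = j - p by omega,
        Bool.not_not]

theorem epar_eq (hk : 1 ≤ k) (hj : j ≤ w.length) (hper : IsPeriod (factor w k j) p)
    (hright : j = w.length ∨ w[j]? ≠ w[j - p]?) (hkp : k + p ≤ j + 1) (hD : Dpar w k = p) :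
    Epar w k = j := by
  rw [Epar, hD]
  refine IsGreatest.csSup_eq ⟨⟨hj, hper⟩, fun m ⟨hm, hper'⟩ => ?_⟩
  by_contra! hjm
  refine hright.elim (by omega) fun hne => hne ?_
  have hshift := ((isPeriod_factor_iff hk hm).mp hper').2 (j - p) (by omega) (by omega)
  rw [Nat.sub_add_cancel (by omega)] at hshift
  exact hshift.symm

theorem stpar_eq (hi : 1 ≤ i) (hj : j ≤ w.length) (hper : IsPeriod (factor w i j) p)
    (hleft : i = 1 ∨ w[i - 2]? ≠ w[i - 2 + p]?) (hik : i ≤ k) (hkp : k + p ≤ j + 1)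
    (hD : Dpar w k = p) (hL : Lpar w k = k + p - 1) : STpar w k = i := by
  rw [STpar, hD, hL]
  refine IsLeast.csInf_eq
    ⟨⟨hi, hper.factor_of_le hi le_rfl (by omega)⟩, fun i' ⟨hi', hper'⟩ => ?_⟩
  by_contra! hii'
  refine hleft.elim (by omega) fun hne => hne ?_
  exact ((isPeriod_factor_iff hi' (by omega)).mp hper').2 (i - 2) (by omega) (by omega)

end Rmap

/-- Every run of `w` lies in the range of the map `R_w`. -/
theorem run_in_range_of_Rmap (w : List Bool) (i j : ℕ) (h : IsRun w i j) :
    ∃ k, 1 < k ∧ k ≤ w.length ∧ Rmap w k = (i, j) := by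
  obtain ⟨hi, hij, hj, h2p, hleft, hright⟩ := h
  set p := leastPeriod (factor w i j)
  have hp := isLeast_leastPeriod (factor w i j)
  have hper : IsPeriod (factor w i j) p := hp.1
  have hp1 := hper.1
  obtain ⟨a, ha⟩ : ∃ a, w[j - p]? = some a := Option.isSome_iff_exists.mp (by simp; omega)
  obtain ⟨k, hik, hkp, hlyn⟩ := exists_isLyndon_factor (!a) hi hj hp (by omega)
  have hperk := hper.factor_of_le hi hik.le le_rfl
  have hc := cpar_eq_of_isLyndon hi hj hper hik (by omega) ha hlyn
  have hL := lpar_eq (by omega) hj hperk (by omega) ha hright hc hlyn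
  have hD : Dpar w k = p := by rw [Dpar, hL]; omega
  refine ⟨k, by omega, by omega, ?_⟩
  rw [Rmap, stpar_eq hi hj hper hleft hik.le (by omega) hD hL,
    epar_eq (by omega) hj hperk hright (by omega) hD]
end

section
/- Every binary word of length n ≥ 1 has strictly fewer than n runs; consequently ρ(n) < n for all n ≥ 1. -/
/-!
Each run `[i..j]` of least period `p` is sent to a position `t ∈ (i, i + p]` where a Lyndon
rotation of its period starts, for the order in which the letter following the run is the smaller
one. For that order this root is the longest Lyndon factor starting at `t`: a longer one either has
period `p`, while Lyndon words are unbordered, or loses against its rotation by `p` at the mismatch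
that ends the run. So when two runs are sent to the same `t`, a root of length at least 2 fixes the
order by its first letter, the two roots have the same length, and runs of the same period sharing
`p + 1` letters coincide. Since `t ≥ 2`, a word of length `n` has at most `n - 1` runs.
-/

theorem factor_length {w : List Bool} {i j : ℕ} (hi : 1 ≤ i) (hj : j ≤ w.length) :
    (factor w i j).length = j + 1 - i := by
  simp only [factor, List.length_take, List.length_drop]
  omega

theorem factor_getElem? {w : List Bool} {i j k : ℕ} (hk : k < j + 1 - i) :
    (factor w i j)[k]? = w[i - 1 + k]? := by
  rw [factor, List.getElem?_take_of_lt hk, List.getElem?_drop]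

theorem isPeriod_leastPeriod (v : List Bool) : IsPeriod v (leastPeriod v) :=
  Nat.sInf_mem (s := {p | IsPeriod v p})
    ⟨v.length + 1, by omega, fun k hk => absurd hk (by omega)⟩

theorem leastPeriod_le_of_isPeriod {v : List Bool} {q : ℕ} (h : IsPeriod v q) :
    leastPeriod v ≤ q :=
  Nat.sInf_le h

theorem one_le_leastPeriod (v : List Bool) : 1 ≤ leastPeriod v :=
  (isPeriod_leastPeriod v).1

/-- `LexLt c` read off at a first difference; the two agree on words of the same length. -/
def LexPrec (c : Bool) (A B : List Bool) : Prop :=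
  ∃ s : ℕ, (∀ l < s, A[l]? = B[l]?) ∧ A[s]? = some c ∧ B[s]? = some (!c)

namespace LexPrec

variable {c : Bool} {A B C : List Bool}

theorem asymm (h₁ : LexPrec c A B) (h₂ : LexPrec c B A) : False := by
  obtain ⟨s, hs, hA, hB⟩ := h₁
  obtain ⟨s', hs', hB', hA'⟩ := h₂
  rcases lt_trichotomy s s' with h | rfl | h
  · simpa [hA, hB] using hs' s h
  · simp [hA] at hA'
  · simpa [hA', hB'] using hs s' h

theorem trans (h₁ : LexPrec c A B) (h₂ : LexPrec c B C) : LexPrec c A C := by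
  obtain ⟨s, hs, hA, hB⟩ := h₁
  obtain ⟨s', hs', hB', hC'⟩ := h₂
  rcases lt_trichotomy s s' with h | rfl | h
  · exact ⟨s, fun l hl => (hs l hl).trans (hs' l (hl.trans h)), hA, (hs' s h).symm.trans hB⟩
  · exact ⟨s, fun l hl => (hs l hl).trans (hs' l hl), hA, hC'⟩
  · exact ⟨s', fun l hl => (hs l (hl.trans h)).trans (hs' l hl), (hs s' h).trans hB', hC'⟩

instance : IsStrictOrder (List Bool) (LexPrec c) where
  irrefl _ h := h.asymm h
  trans _ _ _ := LexPrec.trans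

theorem of_append_left {x y z : List Bool} (h : LexPrec c (x ++ y) (x ++ z)) :
    LexPrec c y z := by
  obtain ⟨s, hs, hy, hz⟩ := h
  have hxs : x.length ≤ s := by
    by_contra! hlt
    rw [List.getElem?_append_left hlt] at hy hz
    simp [hy] at hz
  refine ⟨s - x.length, fun l hl => ?_, ?_, ?_⟩
  · simpa [List.getElem?_append_right] using hs (x.length + l) (by omega)
  · rwa [List.getElem?_append_right hxs] at hy
  · rwa [List.getElem?_append_right hxs] at hz

theorem of_append_right {x y z : List Bool} (hyz : y.length = z.length)
    (h : LexPrec c (y ++ x) (z ++ x)) : LexPrec c y z := by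
  obtain ⟨s, hs, hy, hz⟩ := h
  have hsy : s < y.length := by
    by_contra! hle
    rw [List.getElem?_append_right hle, hyz] at hy
    rw [List.getElem?_append_right (hyz ▸ hle), hy] at hz
    simp at hz
  refine ⟨s, fun l hl => ?_, ?_, ?_⟩
  · simpa [List.getElem?_append_left (hl.trans hsy),
      List.getElem?_append_left (hyz ▸ hl.trans hsy)] using hs l hl
  · rwa [List.getElem?_append_left hsy] at hy
  · rwa [List.getElem?_append_left (hyz ▸ hsy)] at hz

end LexPrec

theorem lexPrec_or_lexPrec_of_ne (c : Bool) {A B : List Bool} (hlen : A.length = B.length)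
    (hne : A ≠ B) : LexPrec c A B ∨ LexPrec c B A := by
  have hex : ∃ s : ℕ, A[s]? ≠ B[s]? := by
    by_contra! h
    exact hne (List.ext_getElem? h)
  set s := Nat.find hex
  have hlt : ∀ l < s, A[l]? = B[l]? := fun l hl => not_not.1 (Nat.find_min hex hl)
  have hsA : s < A.length := by
    by_contra! h
    exact Nat.find_spec hex (by rw [List.getElem?_eq_none h, List.getElem?_eq_none (hlen ▸ h)])
  obtain ⟨a, ha⟩ : ∃ a, A[s]? = some a := ⟨_, List.getElem?_eq_getElem hsA⟩
  obtain ⟨b, hb⟩ : ∃ b, B[s]? = some b := ⟨_, List.getElem?_eq_getElem (hlen ▸ hsA)⟩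
  have hba : b = !a := Bool.eq_not_iff.2 fun h => Nat.find_spec hex (by rw [ha, hb, h])
  rcases Bool.eq_or_eq_not a c with rfl | rfl
  · exact Or.inl ⟨s, hlt, ha, hba ▸ hb⟩
  · exact Or.inr ⟨s, fun l hl => (hlt l hl).symm, by rw [hb, hba, Bool.not_not], ha⟩

/-- Lyndon words, characterised as the words strictly smaller than all their proper rotations. -/
def IsLyndonRot (c : Bool) (v : List Bool) : Prop :=
  ∀ d, 0 < d → d < v.length → LexPrec c v (v.rotate d)

namespace IsLyndonRot

variable {c : Bool} {v : List Bool}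

theorem getElem?_zero (h : IsLyndonRot c v) (hv : 2 ≤ v.length) : v[0]? = some c := by
  obtain ⟨s, hs, hvs, -⟩ := h 1 one_pos hv
  have hsv : s < v.length := (List.getElem?_eq_some_iff.1 hvs).1
  have hconst : ∀ k ≤ s, v[k]? = v[0]? := by
    intro k hk
    induction k with
    | zero => rfl
    | succ k ih =>
      rw [← ih (by omega), hs k (by omega), List.getElem?_rotate (by omega),
        Nat.mod_eq_of_lt (by omega)]
  rw [← hconst s le_rfl, hvs]

theorem getElem?_length_sub_one (h : IsLyndonRot c v) (hv : 2 ≤ v.length) :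
    v[v.length - 1]? = some (!c) := by
  obtain ⟨s, hs, hvs, hrs⟩ := h (v.length - 1) (by omega) (by omega)
  have hsv : s < v.length := (List.getElem?_eq_some_iff.1 hvs).1
  have hrot : ∀ k, 0 < k → k < v.length → (v.rotate (v.length - 1))[k]? = v[k - 1]? := by
    intro k hk hkv
    rw [List.getElem?_rotate hkv, show k + (v.length - 1) = k - 1 + v.length by omega,
      Nat.add_mod_right, Nat.mod_eq_of_lt (by omega)]
  have hrot0 : (v.rotate (v.length - 1))[0]? = v[v.length - 1]? := by
    rw [List.getElem?_rotate (by omega), zero_add, Nat.mod_eq_of_lt (by omega)]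
  rcases Nat.eq_zero_or_pos s with rfl | hs0
  · rwa [← hrot0]
  · have hconst : ∀ k < s, v[k]? = v[0]? := by
      intro k hk
      induction k with
      | zero => rfl
      | succ k ih => rw [hs (k + 1) hk, hrot (k + 1) (by omega) (by omega), Nat.add_sub_cancel,
          ih (by omega)]
    rw [← hrot0, ← hs 0 hs0, ← hconst (s - 1) (by omega), ← hrot s hs0 hsv, hrs]

/-- Lyndon words are unbordered: the border `b = v.take (|v| - q)` of `v = b ++ s = s' ++ b`
would give both `s < s'` (rotation by `q`) and `s' < s` (rotation by `|v| - q`). -/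
theorem not_isPeriod (h : IsLyndonRot c v) {q : ℕ} (hq : IsPeriod v q) (hqv : q < v.length) :
    False := by
  have hq1 := hq.1
  have hborder : v.drop q = v.take (v.length - q) := List.ext_getElem? fun k => by
    by_cases hk : k < v.length - q
    · rw [List.getElem?_drop, List.getElem?_take_of_lt hk, hq.2 k (by omega), add_comm]
    · rw [List.getElem?_eq_none (by simp; omega), List.getElem?_eq_none (by simp; omega)]
  have h₁ : LexPrec c (v.drop (v.length - q)) (v.take q) := by
    refine LexPrec.of_append_left (x := v.take (v.length - q)) ?_
    rw [List.take_append_drop, ← hborder, ← List.rotate_eq_drop_append_take hqv.le]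
    exact h q hq1 hqv
  have h₂ : LexPrec c (v.take q) (v.drop (v.length - q)) := by
    refine LexPrec.of_append_right (x := v.drop q) (by simp; omega) ?_
    rw [List.take_append_drop, hborder, ← List.rotate_eq_drop_append_take (by omega)]
    exact h (v.length - q) (by omega) (by omega)
  exact h₁.asymm h₂

end IsLyndonRot

theorem exists_isLyndonRot_rotate (c : Bool) {u : List Bool} (hu : u ≠ [])
    (hprim : ∀ δ, 0 < δ → δ < u.length → u.rotate δ ≠ u) :
    ∃ d, 0 < d ∧ d ≤ u.length ∧ IsLyndonRot c (u.rotate d) := by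
  set S := {v | ∃ d, u.rotate d = v}
  have hS : S.Finite := (List.finite_length_eq Bool u.length).subset <| by
    rintro _ ⟨d, rfl⟩
    exact List.length_rotate u d
  have hwf := Set.wellFoundedOn_iff.1 (hS.wellFoundedOn (r := LexPrec c))
  obtain ⟨_, ⟨d₀, rfl⟩, hmin⟩ := hwf.has_min S ⟨u, 0, u.rotate_zero⟩
  have hlyn : IsLyndonRot c (u.rotate d₀) := by
    intro e he hel
    rw [List.length_rotate] at hel
    have hne : (u.rotate d₀).rotate e ≠ u.rotate d₀ := by
      rw [List.rotate_rotate, add_comm, ← List.rotate_rotate, Ne, List.rotate_eq_rotate]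
      exact hprim e he hel
    have hmem : (u.rotate d₀).rotate e ∈ S := ⟨d₀ + e, (List.rotate_rotate ..).symm⟩
    refine (lexPrec_or_lexPrec_of_ne c (by simp) hne.symm).resolve_right fun hlt => ?_
    exact hmin _ hmem ⟨hlt, hmem, d₀, rfl⟩
  have hlen : 0 < u.length := List.length_pos_of_ne_nil hu
  rcases Nat.eq_zero_or_pos (d₀ % u.length) with h0 | hpos
  · refine ⟨u.length, hlen, le_rfl, ?_⟩
    rw [List.rotate_length]
    rwa [← List.rotate_mod, h0, List.rotate_zero] at hlyn
  · exact ⟨d₀ % u.length, hpos, (Nat.mod_lt _ hlen).le, by rwa [List.rotate_mod]⟩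

namespace IsRun

variable {w : List Bool} {i j : ℕ}

theorem getElem?_add_leastPeriod (hr : IsRun w i j) {x : ℕ} (hx : i - 1 ≤ x)
    (hxj : x + leastPeriod (factor w i j) < j) :
    w[x]? = w[x + leastPeriod (factor w i j)]? := by
  have hper := (isPeriod_leastPeriod (factor w i j)).2 (x - (i - 1))
  rw [factor_length hr.1 hr.2.2.1, factor_getElem? (by omega), factor_getElem? (by omega)] at hper
  convert hper (by omega) using 2 <;> omega

theorem leastPeriod_le (hr : IsRun w i j) {q : ℕ} (hq : 1 ≤ q)
    (hper : ∀ x, i - 1 ≤ x → x + q < j → w[x]? = w[x + q]?) :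
    leastPeriod (factor w i j) ≤ q := by
  have hi := hr.1
  refine leastPeriod_le_of_isPeriod ⟨hq, fun k hk => ?_⟩
  rw [factor_length hr.1 hr.2.2.1] at hk
  rw [factor_getElem? (by omega), factor_getElem? (by omega), ← add_assoc]
  exact hper _ (by omega) (by omega)

theorem getElem?_eq_mod (hr : IsRun w i j) {x : ℕ} (hx : x < j + 1 - i) :
    w[i - 1 + x]? = w[i - 1 + x % leastPeriod (factor w i j)]? := by
  set p := leastPeriod (factor w i j)
  have hp := one_le_leastPeriod (factor w i j)
  have hi := hr.1
  induction x using Nat.strong_induction_on with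
  | _ x ih =>
    rcases lt_or_ge x p with hxp | hxp
    · rw [Nat.mod_eq_of_lt hxp]
    · rw [Nat.mod_eq_sub_mod hxp, ← ih (x - p) (by omega) (by omega),
        hr.getElem?_add_leastPeriod (x := i - 1 + (x - p)) (by omega) (by omega)]
      congr 1
      omega

theorem length_root (hr : IsRun w i j) :
    (factor w i (i + leastPeriod (factor w i j) - 1)).length = leastPeriod (factor w i j) := by
  have := hr.1
  have := hr.2.2.2.1
  have := hr.2.2.1
  have := one_le_leastPeriod (factor w i j)
  rw [factor_length hr.1 (by omega)]
  omega

theorem getElem?_eq_root (hr : IsRun w i j) {x : ℕ} (hx : x < j + 1 - i) :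
    w[i - 1 + x]? =
      (factor w i (i + leastPeriod (factor w i j) - 1))[x % leastPeriod (factor w i j)]? := by
  have := Nat.mod_lt x (one_le_leastPeriod (factor w i j))
  rw [hr.getElem?_eq_mod hx, factor_getElem? (by omega)]

theorem factor_eq_rotate (hr : IsRun w i j) {t : ℕ} (hit : i ≤ t)
    (htj : t + leastPeriod (factor w i j) ≤ j + 1) :
    factor w t (t + leastPeriod (factor w i j) - 1) =
      (factor w i (i + leastPeriod (factor w i j) - 1)).rotate (t - i) := by
  have := hr.2.2.1
  have hi := hr.1
  apply List.ext_getElem?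
  intro k
  rcases lt_or_ge k (leastPeriod (factor w i j)) with hk | hk
  · rw [factor_getElem? (by omega), List.getElem?_rotate (by rwa [hr.length_root]),
      hr.length_root, ← hr.getElem?_eq_root (by omega)]
    congr 1
    omega
  · rw [List.getElem?_eq_none (by rw [factor_length (by omega) (by omega)]; omega),
      List.getElem?_eq_none (by rwa [List.length_rotate, hr.length_root])]

theorem rotate_root_ne (hr : IsRun w i j) {δ : ℕ} (hδ : 0 < δ)
    (hδp : δ < leastPeriod (factor w i j)) :
    (factor w i (i + leastPeriod (factor w i j) - 1)).rotate δ ≠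
      factor w i (i + leastPeriod (factor w i j) - 1) := by
  set p := leastPeriod (factor w i j)
  set u := factor w i (i + p - 1)
  intro hfix
  refine absurd (hr.leastPeriod_le hδ fun x hx hxj => ?_) (by omega)
  obtain ⟨y, rfl⟩ : ∃ y, x = i - 1 + y := ⟨x - (i - 1), by omega⟩
  calc w[i - 1 + y]? = u[y % p]? := hr.getElem?_eq_root (by omega)
    _ = (u.rotate δ)[y % p]? := by rw [hfix]
    _ = u[(y + δ) % p]? := by
      rw [List.getElem?_rotate (by rw [hr.length_root]; exact Nat.mod_lt _ (by omega)),
        hr.length_root, Nat.mod_add_mod]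
    _ = w[i - 1 + y + δ]? := by rw [add_assoc, hr.getElem?_eq_root (by omega)]

theorem exists_isLyndonRot_factor (hr : IsRun w i j) (c : Bool) :
    ∃ t, i < t ∧ t + leastPeriod (factor w i j) ≤ j + 1 ∧
      IsLyndonRot c (factor w t (t + leastPeriod (factor w i j) - 1)) := by
  have hroot : factor w i (i + leastPeriod (factor w i j) - 1) ≠ [] :=
    List.ne_nil_of_length_pos (by rw [hr.length_root]; exact one_le_leastPeriod _)
  obtain ⟨d, hd, hdp, hlyn⟩ := exists_isLyndonRot_rotate c hroot fun δ hδ hδp =>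
    hr.rotate_root_ne hδ (by rwa [hr.length_root] at hδp)
  rw [hr.length_root] at hdp
  have := hr.2.2.2.1
  refine ⟨i + d, by omega, by omega, ?_⟩
  rwa [hr.factor_eq_rotate (by omega) (by omega), Nat.add_sub_cancel_left]

theorem not_isLyndonRot_factor_of_le (hr : IsRun w i j) {c : Bool} {t m : ℕ} (hit : i ≤ t)
    (hpm : leastPeriod (factor w i j) < m) (hmj : t + m ≤ j + 1) :
    ¬ IsLyndonRot c (factor w t (t + m - 1)) := by
  have := hr.2.2.1
  have hi := hr.1
  have hlen : (factor w t (t + m - 1)).length = m := by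
    rw [factor_length (by omega) (by omega)]
    omega
  refine fun hlyn => hlyn.not_isPeriod ⟨one_le_leastPeriod _, fun k hk => ?_⟩ (hlen ▸ hpm)
  rw [hlen] at hk
  rw [factor_getElem? (by omega), factor_getElem? (by omega), ← add_assoc]
  exact hr.getElem?_add_leastPeriod (by omega) (by omega)

/-- If the factor overtakes the end `j` of the run, its rotation by the period `p` wins at the
mismatch `w[j] ≠ w[j - p]`. -/
theorem not_isLyndonRot_factor_of_gt (hr : IsRun w i j) {c : Bool}
    (hc : j < w.length → w[j]? = some c) {t m : ℕ} (hit : i ≤ t)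
    (htj : t + leastPeriod (factor w i j) ≤ j + 1) (hjm : j + 1 < t + m)
    (hmw : t + m ≤ w.length + 1) :
    ¬ IsLyndonRot c (factor w t (t + m - 1)) := by
  set p := leastPeriod (factor w i j)
  set μ := factor w t (t + m - 1)
  have hi := hr.1
  have hp := one_le_leastPeriod (factor w i j)
  have hlen : μ.length = m := by
    rw [factor_length (by omega) (by omega)]
    omega
  have hμ : ∀ k < m, μ[k]? = w[t - 1 + k]? := fun k hk => factor_getElem? (by omega)
  have hrot : ∀ k, k + p < m → (μ.rotate p)[k]? = μ[k + p]? := by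
    intro k hk
    rw [List.getElem?_rotate (by omega), hlen, Nat.mod_eq_of_lt hk]
  have hwj : w[j]? = some c := hc (by omega)
  have hmis : w[j - p]? = some (!c) := by
    have hne : w[j]? ≠ w[j - p]? := hr.2.2.2.2.2.resolve_left (by omega)
    rw [List.getElem?_eq_getElem (by omega : j - p < w.length)] at hne ⊢
    rw [hwj, Ne, Option.some_inj] at hne
    exact congrArg some (Bool.eq_not_iff.2 fun h => hne h.symm)
  refine fun hlyn => (hlyn p hp (by omega)).asymm ⟨j + 1 - t - p, fun l hl => ?_, ?_, ?_⟩
  · rw [hrot l (by omega), hμ l (by omega), hμ (l + p) (by omega), ← add_assoc]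
    exact (hr.getElem?_add_leastPeriod (by omega) (by omega)).symm
  · rw [hrot _ (by omega), hμ _ (by omega), show t - 1 + (j + 1 - t - p + p) = j by omega, hwj]
  · rw [hμ _ (by omega), show t - 1 + (j + 1 - t - p) = j - p by omega, hmis]

theorem le_of_overlap {i' j' : ℕ} (hr : IsRun w i j) (hr' : IsRun w i' j')
    (hp : leastPeriod (factor w i' j') = leastPeriod (factor w i j))
    (hij' : i + leastPeriod (factor w i j) ≤ j') (hi'j : i' + leastPeriod (factor w i j) ≤ j) :
    i ≤ i' ∧ j' ≤ j := by
  have hi' := hr'.1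
  have hj' := hr'.2.2.1
  obtain ⟨-, -, -, -, hleft, hright⟩ := hr
  constructor
  · by_contra! hlt
    refine hleft.resolve_left (by omega) ?_
    rw [← hp]
    exact hr'.getElem?_add_leastPeriod (by omega) (by omega)
  · by_contra! hlt
    refine hright.resolve_left (by omega) ?_
    have h := hr'.getElem?_add_leastPeriod (x := j - leastPeriod (factor w i j)) (by omega)
      (by omega)
    rw [hp, Nat.sub_add_cancel (by omega)] at h
    exact h.symm

end IsRun

def IsLyndonRootStart (w : List Bool) (i j t : ℕ) : Prop :=
  IsRun w i j ∧ i < t ∧ t + leastPeriod (factor w i j) ≤ j + 1 ∧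
    ∃ c, IsLyndonRot c (factor w t (t + leastPeriod (factor w i j) - 1)) ∧
      ∀ m, leastPeriod (factor w i j) < m → t + m ≤ w.length + 1 →
        ¬ IsLyndonRot c (factor w t (t + m - 1))

section

variable {w : List Bool} {i j t : ℕ}

theorem IsRun.exists_isLyndonRootStart (hr : IsRun w i j) : ∃ t, IsLyndonRootStart w i j t := by
  obtain ⟨c, hc⟩ : ∃ c, j < w.length → w[j]? = some c := by
    by_cases h : j < w.length
    · exact ⟨w[j], fun _ => List.getElem?_eq_getElem h⟩
    · exact ⟨false, fun h' => absurd h' h⟩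
  obtain ⟨t, hit, htj, hlyn⟩ := hr.exists_isLyndonRot_factor c
  refine ⟨t, hr, hit, htj, c, hlyn, fun m hpm hmw => ?_⟩
  rcases le_or_gt (t + m) (j + 1) with hmj | hjm
  · exact hr.not_isLyndonRot_factor_of_le hit.le hpm hmj
  · exact hr.not_isLyndonRot_factor_of_gt hc hit.le htj hjm hmw

namespace IsLyndonRootStart

theorem mem_Icc (h : IsLyndonRootStart w i j t) : t ∈ Set.Icc 2 w.length := by
  obtain ⟨hr, hit, htj, -⟩ := h
  have := hr.1
  have := hr.2.2.1
  have := one_le_leastPeriod (factor w i j)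
  constructor <;> omega

theorem eq_of_leastPeriod_le {i' j' : ℕ} (h : IsLyndonRootStart w i j t)
    (h' : IsLyndonRootStart w i' j' t)
    (hpp : leastPeriod (factor w i j) ≤ leastPeriod (factor w i' j')) : i = i' ∧ j = j' := by
  obtain ⟨hr, hit, htj, c, hlyn, hlong⟩ := h
  obtain ⟨hr', hit', htj', c', hlyn', -⟩ := h'
  set p := leastPeriod (factor w i j)
  set p' := leastPeriod (factor w i' j')
  have := hr.1
  have := hr'.2.2.1
  have hp : 1 ≤ p := one_le_leastPeriod _
  rcases hpp.eq_or_lt with heq | hlt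
  · have h₁ := hr.le_of_overlap hr' heq.symm (by omega) (by omega)
    have h₂ := hr'.le_of_overlap hr heq (by omega) (by omega)
    omega
  have hlen' : (factor w t (t + p' - 1)).length = p' := by
    rw [factor_length (by omega) (by omega)]
    omega
  have hc' : w[t - 1]? = some c' := by
    have := hlyn'.getElem?_zero (by omega)
    rwa [factor_getElem? (by omega), add_zero] at this
  rcases hp.eq_or_lt with hp1 | hp2
  · -- A run of period 1 makes `w[t - 2] = w[t - 1]`, the first letter `c'` of the root of
    -- period `p'`, but `p'`-periodicity gives `w[t - 2]` = its last letter `!c'`.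
    have hconst : w[t - 2]? = w[t - 1]? := by
      have : w[t - 2]? = w[t - 2 + p]? := hr.getElem?_add_leastPeriod (by omega) (by omega)
      rwa [← hp1, show t - 2 + 1 = t - 1 by omega] at this
    have hlast : w[t - 2 + p']? = some (!c') := by
      have := hlyn'.getElem?_length_sub_one (by omega)
      rwa [hlen', factor_getElem? (by omega), show t - 1 + (p' - 1) = t - 2 + p' by omega] at this
    have : w[t - 2]? = w[t - 2 + p']? := hr'.getElem?_add_leastPeriod (by omega) (by omega)
    rw [hlast, hconst, hc'] at this
    simp at this
  · have hc : w[t - 1]? = some c := by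
      have := hlyn.getElem?_zero (by rw [factor_length (by omega) (by omega)]; omega)
      rwa [factor_getElem? (by omega), add_zero] at this
    obtain rfl : c = c' := Option.some_injective _ (hc.symm.trans hc')
    exact (hlong p' hlt (by omega) hlyn').elim

theorem eq {i' j' : ℕ} (h : IsLyndonRootStart w i j t) (h' : IsLyndonRootStart w i' j' t) :
    i = i' ∧ j = j' := by
  rcases le_total (leastPeriod (factor w i j)) (leastPeriod (factor w i' j')) with hpp | hpp
  · exact h.eq_of_leastPeriod_le h' hpp
  · obtain ⟨rfl, rfl⟩ := h'.eq_of_leastPeriod_le h hpp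
    exact ⟨rfl, rfl⟩

end IsLyndonRootStart

end

theorem numRuns_le_length_sub_one (w : List Bool) : numRuns w ≤ w.length - 1 := by
  choose! f hf using fun r (hr : r ∈ {r : ℕ × ℕ | IsRun w r.1 r.2}) =>
    IsRun.exists_isLyndonRootStart hr
  calc numRuns w ≤ (Set.Icc 2 w.length).ncard :=
        Set.ncard_le_ncard_of_injOn f (fun r hr => (hf r hr).mem_Icc)
          (fun r hr r' hr' hrr' => Prod.ext_iff.2 ((hf r hr).eq (hrr' ▸ hf r' hr')))
          (Set.finite_Icc _ _)
    _ = w.length - 1 := by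
      rw [Set.ncard_Icc_nat]
      omega

theorem rho_le_sub_one (n : ℕ) : rho n ≤ n - 1 :=
  csSup_le ⟨_, List.replicate n false, List.length_replicate, rfl⟩ <| by
    rintro _ ⟨w, rfl, rfl⟩
    exact numRuns_le_length_sub_one w

/-- Every binary word of length `n ≥ 1` has fewer than `n` runs, hence
`ρ(n) < n`. -/
theorem runs_lt_length :
    (∀ w : List Bool, 1 ≤ w.length → numRuns w < w.length) ∧
    (∀ n : ℕ, 1 ≤ n → rho n < n) := by
  refine ⟨fun w hw => ?_, fun n hn => ?_⟩
  · have := numRuns_le_length_sub_one w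
    omega
  · have := rho_le_sub_one n
    omega
end

section
/- Let w be a binary word, let r = [s..e] be an interval in the range of R_w, and let p be the least period of w[s..e]. Say that a position i is a starting position of a ≺_c-Lyndon root of [s..e] if s ≤ i, i+p−1 ≤ e, and w[i..i+p−1] is ≺_c-Lyndon. Then for 1 < i ≤ |w|: R_w(i) = r if and only if one of the following holds: (A) e < |w|, s < i, and i is a starting position of the ≺_{w[e+1]}-Lyndon root of [s..e]; or (B) e = |w|, s < i, and i is a starting position of a ≺_0-Lyndon or a ≺_1-Lyndon root of [s..e]; or (C) s = i, e = |w|, and w[i..e] has period one. -/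
/-!
`R_w(k) = [s..e]` is a maximal repetition of its least period `p = D_w(k)`: the period breaks
at `s - 1` and at `e + 1`. For `s ≤ i`, `R_w(i) = [s..e]` holds exactly when the root
`w[i..i+p-1]` is `≺_{c_w(i)}`-Lyndon and `L_w(i)` stops there. Inside `[s..e]` no longer factor
can be Lyndon, since it has the proper period `p` and Lyndon words are unbordered; past `e`,
Duval's extension lemma shows that `w[i..e+1]` is still Lyndon when `w[e+1] ≠ c_w(i)`, while
for `w[e+1] = c_w(i)` every longer factor has a suffix smaller than itself. It remains to
identify `c_w(i)`: for `s < i` and `p ≥ 2` the root ends with `w[i+p-1] = w[i-1] ≠ c_w(i)`, so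
`c_w(i)` is the smaller letter of the root.
-/

namespace LexLt

variable {c : Bool} {u v z : List Bool}

theorem irrefl (u : List Bool) : ¬ LexLt c u u :=
  List.lex_irrefl (by simp) u

theorem trans (h₁ : LexLt c u v) (h₂ : LexLt c v z) : LexLt c u z :=
  List.lex_trans (fun h h' => ⟨h.1, h'.2⟩) h₁ h₂

theorem asymm (h₁ : LexLt c u v) (h₂ : LexLt c v u) : False :=
  irrefl u (h₁.trans h₂)

theorem lt_or_lt_of_ne (h : u ≠ v) : LexLt c u v ∨ LexLt c v u := by
  have : Std.Trichotomous (fun a b : Bool => a = c ∧ b = !c) :=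
    ⟨by intro a b; cases a <;> cases b <;> cases c <;> simp⟩
  by_contra! h'
  exact h (Std.Trichotomous.trichotomous (r := List.Lex _) u v h'.1 h'.2)

theorem append_left_iff (t : List Bool) : LexLt c (t ++ u) (t ++ v) ↔ LexLt c u v := by
  refine ⟨fun h => ?_, fun h => List.Lex.append_left _ h t⟩
  by_contra hn
  rcases eq_or_ne u v with rfl | hne
  · exact irrefl _ h
  · exact asymm h (List.Lex.append_left _ ((lt_or_lt_of_ne hne).resolve_left hn) t)

theorem append_right (u : List Bool) (hz : z ≠ []) : LexLt c u (u ++ z) := by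
  obtain ⟨a, z, rfl⟩ := List.exists_cons_of_ne_nil hz
  simpa using (append_left_iff u).2 (List.Lex.nil (a := a) (l := z))

theorem of_getElem? (r : ℕ) (hpre : ∀ m < r, u[m]? = v[m]?)
    (hu : u[r]? = some c) (hv : v[r]? = some (!c)) : LexLt c u v := by
  induction r generalizing u v with
  | zero =>
    cases u with | nil => simp at hu | cons a u =>
    cases v with | nil => simp at hv | cons b v =>
    simp only [List.getElem?_cons_zero, Option.some.injEq] at hu hv
    exact List.Lex.rel ⟨hu, hv⟩
  | succ n ih =>
    cases u with | nil => simp at hu | cons a u =>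
    cases v with | nil => simp at hv | cons b v =>
    obtain rfl : a = b := by simpa using hpre 0 (by omega)
    exact List.Lex.cons (ih (fun m hm => by simpa using hpre (m + 1) (by omega))
      (by simpa using hu) (by simpa using hv))

theorem exists_getElem? (h : LexLt c u v) (hp : ¬ u <+: v) :
    ∃ ℓ : ℕ, (∀ m < ℓ, u[m]? = v[m]?) ∧ u[ℓ]? = some c ∧ v[ℓ]? = some (!c) := by
  induction h with
  | nil => exact absurd List.nil_prefix hp
  | @cons a u v _ ih =>
    obtain ⟨ℓ, hag, hu, hv⟩ := ih (fun h => hp (List.prefix_cons_inj a |>.2 h))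
    refine ⟨ℓ + 1, fun m hm => ?_, by simpa using hu, by simpa using hv⟩
    cases m with
    | zero => rfl
    | succ m => simpa using hag m (by omega)
  | rel h => exact ⟨0, by simp, by simp [h.1], by simp [h.2]⟩

theorem append_of_not_prefix (h : LexLt c u v) (hp : ¬ u <+: v) (y z : List Bool) :
    LexLt c (u ++ y) (v ++ z) := by
  obtain ⟨ℓ, hag, hu, hv⟩ := h.exists_getElem? hp
  have hℓu : ℓ < u.length := (List.getElem?_eq_some_iff.1 hu).1
  have hℓv : ℓ < v.length := (List.getElem?_eq_some_iff.1 hv).1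
  refine of_getElem? ℓ (fun m hm => ?_) ?_ ?_
  · rw [List.getElem?_append_left (by omega), List.getElem?_append_left (by omega)]
    exact hag m hm
  · rwa [List.getElem?_append_left hℓu]
  · rwa [List.getElem?_append_left hℓv]

end LexLt

namespace IsLyndon

variable {c : Bool} {u x y : List Bool}

theorem lexLt_of_eq_append (h : IsLyndon c u) (hu : u = x ++ y) (hx : x ≠ []) (hy : y ≠ []) :
    LexLt c u y := by
  have hylen : y.length < u.length := by
    simp [hu, List.length_pos_iff.2 hx]
  have hrot := (h.2 x y hx hy hu).2
  by_contra hn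
  have hyu := (LexLt.lt_or_lt_of_ne (c := c) (u := u) (v := y)
    (by rintro rfl; omega)).resolve_left hn
  by_cases hpre : y <+: u
  · obtain ⟨z, hz⟩ := hpre
    have hz0 : z ≠ [] := by rintro rfl; simp [← hz] at hylen
    have hlen : z.length = x.length := by
      have := congrArg List.length (hz.trans hu); simp only [List.length_append] at this; omega
    have hzx : LexLt c z x := (LexLt.append_left_iff y).1 (hz ▸ hrot)
    have hzx' : ¬ z <+: x := fun hp => LexLt.irrefl z (by rwa [← hp.eq_of_length hlen] at hzx)
    exact (h.2 y z hy hz0 hz.symm).2.asymm (hu ▸ hzx.append_of_not_prefix hzx' y y)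
  · exact hrot.asymm (by simpa using hyu.append_of_not_prefix hpre x [])

theorem lexLt_drop (h : IsLyndon c u) {d : ℕ} (hd0 : 0 < d) (hd : d < u.length) :
    LexLt c u (u.drop d) :=
  h.lexLt_of_eq_append (List.take_append_drop d u).symm
    (List.length_pos_iff.1 (by rw [List.length_take]; omega))
    (List.length_pos_iff.1 (by rw [List.length_drop]; omega))

end IsLyndon

theorem isLyndon_of_forall_lexLt {c : Bool} {u : List Bool} (hne : u ≠ [])
    (hs : ∀ x y, x ≠ [] → y ≠ [] → u = x ++ y → LexLt c u y) : IsLyndon c u := by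
  refine ⟨hne, fun x y hx hy hu => ?_⟩
  have hlen : y.length < u.length := by simp [hu, List.length_pos_iff.2 hx]
  have hlt : LexLt c (u ++ []) (y ++ x) :=
    (by simpa using hs x y hx hy hu : LexLt c u y).append_of_not_prefix
      (fun hp => by have := hp.length_le; omega) [] x
  rw [List.append_nil] at hlt
  exact ⟨fun he => LexLt.irrefl u (by rwa [← he] at hlt), hlt⟩

theorem isLyndon_singleton (c a : Bool) : IsLyndon c [a] := by
  refine ⟨by simp, fun x y hx hy hxy => ?_⟩
  have := congrArg List.length hxy
  simp only [List.length_singleton, List.length_append] at this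
  have := List.length_pos_iff.2 hx
  have := List.length_pos_iff.2 hy
  omega

namespace IsLyndon

variable {c : Bool} {u v : List Bool}

/-- A Lyndon word is unbordered: a proper period `q` would make its prefix of length `|u| - q`
equal to its suffix, which is larger than `u`. -/
theorem length_le_of_isPeriod (h : IsLyndon c u) {q : ℕ} (hq : IsPeriod u q) :
    u.length ≤ q := by
  by_contra! hlt
  have hborder : u.drop q = u.take (u.length - q) := by
    refine List.ext_getElem? fun m => ?_
    by_cases hm : m < u.length - q
    · rw [List.getElem?_drop, List.getElem?_take_of_lt hm, Nat.add_comm]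
      exact (hq.2 m (by omega)).symm
    · rw [List.getElem?_eq_none_iff.2 (by rw [List.length_drop]; omega),
        List.getElem?_eq_none_iff.2 (by rw [List.length_take]; omega)]
  have hsuf := h.lexLt_drop hq.1 hlt
  rw [hborder] at hsuf
  refine hsuf.asymm ?_
  have hq1 := hq.1
  simpa using LexLt.append_right (c := c) (u.take (u.length - q))
    (z := u.drop (u.length - q)) (List.length_pos_iff.1 (by rw [List.length_drop]; omega))

theorem getElem?_length_sub_one (h : IsLyndon c u) (h2 : 2 ≤ u.length) :
    u[u.length - 1]? = some (!c) := by
  obtain ⟨x, b, rfl⟩ : ∃ x b, u = x ++ [b] :=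
    ⟨u.dropLast, u.getLast h.1, (List.dropLast_append_getLast h.1).symm⟩
  have hx : x ≠ [] := by rintro rfl; simp at h2
  have hlt := h.lexLt_of_eq_append rfl hx (List.cons_ne_nil b [])
  obtain ⟨a, t, hat⟩ := List.exists_cons_of_ne_nil (List.append_ne_nil_of_left_ne_nil hx [b])
  rw [hat] at hlt
  cases hlt with
  | cons ht => cases ht
  | rel hab => simp [hab.2]

theorem append (hu : IsLyndon c u) (hv : IsLyndon c v) (huv : LexLt c u v) :
    IsLyndon c (u ++ v) := by
  have hsuf : LexLt c (u ++ v) v := by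
    by_cases hpre : u <+: v
    · obtain ⟨v₂, rfl⟩ := hpre
      have hv₂ : v₂ ≠ [] := by
        rintro rfl; rw [List.append_nil] at huv; exact LexLt.irrefl u huv
      exact (LexLt.append_left_iff u).2 (hv.lexLt_of_eq_append rfl hu.1 hv₂)
    · simpa using huv.append_of_not_prefix hpre v []
  refine isLyndon_of_forall_lexLt (by simp [hu.1]) fun x y hx hy hxy => ?_
  have htot := congrArg List.length hxy
  simp only [List.length_append] at htot
  have := List.length_pos_iff.2 hx
  have := List.length_pos_iff.2 hy
  replace hy : y = (u ++ v).drop x.length := by rw [hxy, List.drop_left]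
  rcases lt_trichotomy x.length u.length with hxu | hxu | hxu
  · rw [hy, List.drop_append_of_le_length hxu.le]
    exact (hu.lexLt_drop (by omega) hxu).append_of_not_prefix
      (fun hp => by have := hp.length_le; rw [List.length_drop] at this; omega) v v
  · rwa [hy, List.drop_append_of_le_length hxu.le, hxu, List.drop_length, List.nil_append]
  · rw [hy, List.drop_append, List.drop_eq_nil_of_le hxu.le, List.nil_append]
    exact hsuf.trans (hv.lexLt_drop (by omega) (by omega))

theorem take_append_not (hv : IsLyndon c v) {r : ℕ} (hr : r < v.length)
    (hc : v[r]? = some c) : IsLyndon c (v.take r ++ [!c]) := by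
  have htr : (v.take r).length = r := by rw [List.length_take]; omega
  refine isLyndon_of_forall_lexLt (by simp) fun x y hx hy hxy => ?_
  have htot := congrArg List.length hxy
  simp only [List.length_append, htr, List.length_singleton] at htot
  have := List.length_pos_iff.2 hx
  have := List.length_pos_iff.2 hy
  set d := x.length
  replace hy : y = (v.take r).drop d ++ [!c] := by
    rw [← List.drop_append_of_le_length (by omega), hxy, List.drop_left]
  have hz : ∀ m < r, (v.take r ++ [!c])[m]? = v[m]? := fun m hm => by
    rw [List.getElem?_append_left (by omega), List.getElem?_take_of_lt hm]
  have hy' : ∀ m < r - d, y[m]? = v[d + m]? := fun m hm => by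
    rw [hy, List.getElem?_append_left (by rw [List.length_drop, htr]; omega), List.getElem?_drop,
      List.getElem?_take_of_lt (by omega)]
  have hylast : y[r - d]? = some (!c) := by
    rw [hy, List.getElem?_append_right (by rw [List.length_drop, htr]), List.length_drop, htr,
      Nat.sub_self]
    rfl
  obtain ⟨ℓ, hag, hvℓ, hvdℓ⟩ :=
    (hv.lexLt_drop (d := d) (by omega) (by omega)).exists_getElem? fun hp => by
      have := hp.length_le; rw [List.length_drop] at this; omega
  simp only [List.getElem?_drop] at hag hvdℓ
  -- the first mismatch between `v` and `v.drop d` decides, unless it lies beyond `r - d`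
  by_cases hℓ : ℓ < r - d
  · exact LexLt.of_getElem? ℓ (fun m hm => by rw [hz m (by omega), hy' m (by omega), hag m hm])
      (by rw [hz ℓ (by omega), hvℓ]) (by rw [hy' ℓ hℓ, hvdℓ])
  · have hkey : v[r - d]? = some c := by
      rcases eq_or_lt_of_le (not_lt.1 hℓ) with heq | hlt
      · rwa [heq]
      · rw [hag (r - d) hlt, show d + (r - d) = r by omega, hc]
    exact LexLt.of_getElem? (r - d)
      (fun m hm => by rw [hz m (by omega), hy' m hm, hag m (by omega)])
      (by rw [hz _ (by omega), hkey]) hylast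

/-- Duval's extension lemma. -/
theorem flatten_replicate_append (hv : IsLyndon c v) {r : ℕ} (hr : r < v.length)
    (hc : v[r]? = some c) (m : ℕ) :
    IsLyndon c ((List.replicate m v).flatten ++ (v.take r ++ [!c])) := by
  have htr : (v.take r).length = r := by rw [List.length_take]; omega
  induction m with
  | zero => simpa using hv.take_append_not hr hc
  | succ n ih =>
    rw [List.replicate_succ, List.flatten_cons, List.append_assoc]
    refine hv.append ih ?_
    cases n with
    | zero =>
      refine LexLt.of_getElem? r (fun m hm => ?_) hc ?_
      · simp only [List.replicate_zero, List.flatten_nil, List.nil_append]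
        rw [List.getElem?_append_left (by omega), List.getElem?_take_of_lt hm]
      · simp [htr]
    | succ n =>
      rw [List.replicate_succ, List.flatten_cons, List.append_assoc]
      exact LexLt.append_right v (by simp)

end IsLyndon

/-- The `x`-th letter of `w`, 1-based as in `factor` (junk value `false` out of range). -/
def letter (w : List Bool) (x : ℕ) : Bool := w.getD (x - 1) false

def PeriodicOn (w : List Bool) (a b q : ℕ) : Prop :=
  ∀ x, a ≤ x → x + q ≤ b → letter w x = letter w (x + q)

section Letters

variable {w : List Bool} {a b q : ℕ}

theorem cpar_eq_not_letter (i : ℕ) : cpar w i = !letter w (i - 1) := by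
  rw [cpar, letter, Nat.sub_sub]

theorem getD_eq_letter (e : ℕ) : w.getD e false = letter w (e + 1) := by
  rw [letter, Nat.add_sub_cancel]

theorem length_factor_s9 (ha : 1 ≤ a) (hb : b ≤ w.length) :
    (factor w a b).length = b + 1 - a := by
  rw [factor, List.length_take, List.length_drop]; omega

theorem getElem?_factor_s9 (ha : 1 ≤ a) (hb : b ≤ w.length) {t : ℕ} (ht : t < b + 1 - a) :
    (factor w a b)[t]? = some (letter w (a + t)) := by
  rw [factor, List.getElem?_take_of_lt ht, List.getElem?_drop, letter,
    List.getD_eq_getElem?_getD, show a + t - 1 = a - 1 + t by omega,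
    List.getElem?_eq_getElem (by omega), Option.getD_some]

theorem factor_self (ha : 1 ≤ a) (hb : a ≤ w.length) : factor w a a = [letter w a] := by
  refine List.ext_getElem? fun m => ?_
  rcases Nat.eq_zero_or_pos m with rfl | hm
  · simpa using getElem?_factor_s9 ha hb (t := 0) (by omega)
  · rw [List.getElem?_eq_none_iff.2 (by rw [length_factor_s9 ha hb]; omega),
      List.getElem?_eq_none_iff.2 (by rw [List.length_singleton]; omega)]

theorem isPeriod_factor_iff_s9 (ha : 1 ≤ a) (hb : b ≤ w.length) :
    IsPeriod (factor w a b) q ↔ 1 ≤ q ∧ PeriodicOn w a b q := by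
  refine and_congr_right fun hq => ⟨fun hP x hx hxq => ?_, fun hP k hk => ?_⟩
  · have hk := hP (x - a) (by rw [length_factor_s9 ha hb]; omega)
    rw [getElem?_factor_s9 ha hb (by omega), getElem?_factor_s9 ha hb (by omega)] at hk
    simpa [show a + (x - a) = x by omega, show a + (x - a + q) = x + q by omega] using hk
  · rw [length_factor_s9 ha hb] at hk
    rw [getElem?_factor_s9 ha hb (by omega), getElem?_factor_s9 ha hb (by omega), ← Nat.add_assoc,
      hP (a + k) (by omega) (by omega)]

end Letters

namespace PeriodicOn

variable {w : List Bool} {a b q : ℕ}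

theorem mono {a' b' : ℕ} (h : PeriodicOn w a b q) (ha : a ≤ a') (hb : b' ≤ b) :
    PeriodicOn w a' b' q := fun x hx hxq => h x (by omega) (by omega)

theorem glue {a' b' : ℕ} (h₁ : PeriodicOn w a b q) (h₂ : PeriodicOn w a' b' q)
    (hab : a' + q ≤ b + 1) : PeriodicOn w a b' q := fun x hx hxq => by
  by_cases hxb : x + q ≤ b
  · exact h₁ x hx hxb
  · exact h₂ x (by omega) hxq

theorem letter_eq_of_dvd (h : PeriodicOn w a b q) {x y : ℕ} (hx : a ≤ x) (hxy : x ≤ y)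
    (hy : y ≤ b) (hdvd : q ∣ y - x) : letter w x = letter w y := by
  obtain ⟨m, hm⟩ := hdvd
  obtain rfl : y = x + q * m := by omega
  clear hm hxy
  induction m with
  | zero => rfl
  | succ m ih =>
    rw [ih (by nlinarith), Nat.mul_succ, ← Nat.add_assoc]
    exact h _ (by omega) (by rwa [Nat.add_assoc, ← Nat.mul_succ])

end PeriodicOn

theorem List.getElem?_flatten_replicate_append {α : Type*} (m : ℕ) (v z : List α) {t : ℕ}
    (ht : t < m * v.length) : ((List.replicate m v).flatten ++ z)[t]? = v[t % v.length]? := by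
  induction m generalizing t with
  | zero => simp at ht
  | succ m ih =>
    rw [List.replicate_succ, List.flatten_cons, List.append_assoc]
    by_cases htv : t < v.length
    · rw [List.getElem?_append_left htv, Nat.mod_eq_of_lt htv]
    · rw [Nat.succ_mul] at ht
      rw [List.getElem?_append_right (by omega), ih (by omega), ← Nat.mod_eq_sub_mod (by omega)]

section PeriodicTail

variable {w : List Bool} {i e p : ℕ} {c : Bool}

theorem PeriodicOn.letter_add_mod (hper : PeriodicOn w i e p) (hp : 0 < p)
    (hip : i + p ≤ e + 1) : letter w (i + (e + 1 - i) % p) = letter w (e + 1 - p) := by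
  have hmod : (e + 1 - i) % p < p := Nat.mod_lt _ hp
  have hdiv := Nat.div_add_mod (e + 1 - i) p
  have hq : p ≤ p * ((e + 1 - i) / p) :=
    Nat.le_mul_of_pos_right p ((Nat.one_le_div_iff hp).2 (by omega))
  refine hper.letter_eq_of_dvd (by omega) (by omega) (by omega) ⟨(e + 1 - i) / p - 1, ?_⟩
  rw [Nat.mul_sub_one]; omega

theorem PeriodicOn.factor_succ_eq (hper : PeriodicOn w i e p) (hi : 1 ≤ i) (hp : 0 < p)
    (hip : i + p ≤ e + 1) (he : e < w.length) :
    factor w i (e + 1) = (List.replicate ((e + 1 - i) / p) (factor w i (i + p - 1))).flatten ++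
      ((factor w i (i + p - 1)).take ((e + 1 - i) % p) ++ [letter w (e + 1)]) := by
  set v := factor w i (i + p - 1)
  have hvlen : v.length = p := by rw [length_factor_s9 hi (by omega)]; omega
  set r := (e + 1 - i) % p
  set m := (e + 1 - i) / p
  have hdiv : m * p + r = e + 1 - i := by rw [Nat.mul_comm]; exact Nat.div_add_mod _ _
  have hrp : r < p := Nat.mod_lt _ hp
  have hlen : ((List.replicate m v).flatten).length = m * p := by simp [hvlen]
  have htr : (v.take r).length = r := by rw [List.length_take]; omega
  have hvt : ∀ t < e + 1 - i, v[t % p]? = some (letter w (i + t)) := fun t ht => by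
    have := Nat.mod_le t p
    rw [getElem?_factor_s9 hi (by omega) (by have := Nat.mod_lt t hp; omega),
      hper.letter_eq_of_dvd (y := i + t) (by omega) (by omega) (by omega)
        (by rw [show i + t - (i + t % p) = t - t % p by omega]; exact Nat.dvd_sub_mod t)]
  refine List.ext_getElem? fun t => ?_
  rcases lt_trichotomy t (e + 1 - i) with ht | rfl | ht
  · rw [getElem?_factor_s9 hi (by omega) (by omega), ← hvt t ht]
    by_cases htm : t < m * p
    · rw [List.getElem?_flatten_replicate_append m v _ (by rwa [hvlen]), hvlen]
    · rw [List.getElem?_append_right (by omega), List.getElem?_append_left (by omega),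
        List.getElem?_take_of_lt (by omega), hlen]
      obtain ⟨u, rfl⟩ : ∃ u, t = u + m * p := ⟨t - m * p, by omega⟩
      rw [Nat.add_mul_mod_self_right, Nat.mod_eq_of_lt (by omega), Nat.add_sub_cancel]
  · rw [getElem?_factor_s9 hi (by omega) (by omega), show i + (e + 1 - i) = e + 1 by omega,
      List.getElem?_append_right (by omega), List.getElem?_append_right (by omega),
      hlen, htr, show e + 1 - i - m * p - r = 0 by omega]
    rfl
  · rw [List.getElem?_eq_none_iff.2 (by rw [length_factor_s9 hi (by omega)]; omega),
      List.getElem?_eq_none_iff.2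
        (by simp only [List.length_append, hlen, htr, List.length_singleton]; omega)]

theorem PeriodicOn.isLyndon_factor_succ (hper : PeriodicOn w i e p) (hi : 1 ≤ i)
    (hip : i + p ≤ e + 1) (he : e < w.length) (hv : IsLyndon c (factor w i (i + p - 1)))
    (hroot : letter w (e + 1 - p) = c) (hext : letter w (e + 1) = !c) :
    IsLyndon c (factor w i (e + 1)) := by
  have hvlen : (factor w i (i + p - 1)).length = p := by
    rw [length_factor_s9 hi (by omega)]; omega
  have hp : 0 < p := hvlen ▸ List.length_pos_iff.2 hv.1
  rw [hper.factor_succ_eq hi hp hip he, hext]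
  refine hv.flatten_replicate_append (by rw [hvlen]; exact Nat.mod_lt _ hp) ?_ _
  rw [getElem?_factor_s9 hi (by omega) (by have := Nat.mod_lt (e + 1 - i) hp; omega),
    hper.letter_add_mod hp hip, hroot]

/-- The suffix of `w[i..j]` starting at `i + m * p`, with `m * p + r = e + 1 - i`, agrees with
`w[i..j]` for `r` letters and then carries `c` where `w[i..j]` carries `!c`. -/
theorem PeriodicOn.not_isLyndon_factor (hper : PeriodicOn w i e p) (hi : 1 ≤ i) (hp : 0 < p)
    (hip : i + p ≤ e + 1) {j : ℕ} (hej : e < j) (hj : j ≤ w.length)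
    (hroot : letter w (e + 1 - p) = !c) (hext : letter w (e + 1) = c) :
    ¬ IsLyndon c (factor w i j) := by
  intro hLyn
  set r := (e + 1 - i) % p
  set m := (e + 1 - i) / p
  have hdiv : m * p + r = e + 1 - i := by rw [Nat.mul_comm]; exact Nat.div_add_mod _ _
  have hrp : r < p := Nat.mod_lt _ hp
  have hmp : p ≤ m * p := Nat.le_mul_of_pos_left p ((Nat.one_le_div_iff hp).2 (by omega))
  have hx : ∀ t < j + 1 - i, (factor w i j)[t]? = some (letter w (i + t)) :=
    fun t ht => getElem?_factor_s9 hi hj ht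
  refine (hLyn.lexLt_drop (d := m * p) (by omega)
    (by rw [length_factor_s9 hi hj]; omega)).asymm (LexLt.of_getElem? r (fun ℓ hℓ => ?_) ?_ ?_)
  · rw [List.getElem?_drop, hx _ (by omega), hx _ (by omega),
      hper.letter_eq_of_dvd (x := i + ℓ) (y := i + (m * p + ℓ)) (by omega) (by omega) (by omega)
        ⟨m, by rw [Nat.mul_comm]; omega⟩]
  · rw [List.getElem?_drop, hx _ (by omega), show i + (m * p + r) = e + 1 by omega, hext]
  · rw [hx _ (by omega), hper.letter_add_mod hp hip, hroot]

end PeriodicTail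

section Parameters

variable {w : List Bool} {i : ℕ}

theorem isGreatest_Lpar (h1 : 1 ≤ i) (h2 : i ≤ w.length) :
    IsGreatest {j | j ≤ w.length ∧ IsLyndon (cpar w i) (factor w i j)} (Lpar w i) := by
  have hmem : i ∈ {j | j ≤ w.length ∧ IsLyndon (cpar w i) (factor w i j)} :=
    ⟨h2, by rw [factor_self h1 h2]; exact isLyndon_singleton _ _⟩
  have hbdd : BddAbove {j | j ≤ w.length ∧ IsLyndon (cpar w i) (factor w i j)} :=
    ⟨w.length, fun j hj => hj.1⟩
  exact ⟨Nat.sSup_mem ⟨i, hmem⟩ hbdd, fun j hj => le_csSup hbdd hj⟩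

theorem le_Lpar (h1 : 1 ≤ i) (h2 : i ≤ w.length) : i ≤ Lpar w i :=
  (isGreatest_Lpar h1 h2).2 ⟨h2, by rw [factor_self h1 h2]; exact isLyndon_singleton _ _⟩

theorem periodicOn_Lpar (i : ℕ) : PeriodicOn w i (Lpar w i) (Dpar w i) :=
  fun x hx hxD => by rw [Dpar] at hxD; omega

theorem isGreatest_Epar (h1 : 1 ≤ i) (h2 : i ≤ w.length) :
    IsGreatest {j | j ≤ w.length ∧ PeriodicOn w i j (Dpar w i)} (Epar w i) := by
  have hL := isGreatest_Lpar h1 h2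
  have hiL := le_Lpar h1 h2
  have hD : 1 ≤ Dpar w i := by rw [Dpar]; omega
  have hset : {j | j ≤ w.length ∧ IsPeriod (factor w i j) (Dpar w i)} =
      {j | j ≤ w.length ∧ PeriodicOn w i j (Dpar w i)} := by
    ext j
    exact and_congr_right fun hj => (isPeriod_factor_iff_s9 h1 hj).trans (and_iff_right hD)
  have hbdd : BddAbove {j | j ≤ w.length ∧ PeriodicOn w i j (Dpar w i)} :=
    ⟨w.length, fun j hj => hj.1⟩
  rw [Epar, hset]
  exact ⟨Nat.sSup_mem ⟨_, hL.1.1, periodicOn_Lpar i⟩ hbdd, fun j hj => le_csSup hbdd hj⟩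

theorem isLeast_STpar (h1 : 1 ≤ i) (h2 : i ≤ w.length) :
    IsLeast {j | 1 ≤ j ∧ PeriodicOn w j (Lpar w i) (Dpar w i)} (STpar w i) := by
  have hLn := (isGreatest_Lpar h1 h2).1.1
  have hD : 1 ≤ Dpar w i := by have := le_Lpar h1 h2; rw [Dpar]; omega
  have hset : {j | 1 ≤ j ∧ IsPeriod (factor w j (Lpar w i)) (Dpar w i)} =
      {j | 1 ≤ j ∧ PeriodicOn w j (Lpar w i) (Dpar w i)} := by
    ext j
    exact and_congr_right fun hj => (isPeriod_factor_iff_s9 hj hLn).trans (and_iff_right hD)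
  rw [STpar, hset]
  exact ⟨Nat.sInf_mem ⟨i, h1, periodicOn_Lpar i⟩, fun j hj => Nat.sInf_le hj⟩

end Parameters

structure IsMaximalPeriodic (w : List Bool) (s e p : ℕ) : Prop where
  one_le_start : 1 ≤ s
  period_pos : 0 < p
  end_le_length : e ≤ w.length
  periodicOn : PeriodicOn w s e p
  left_maximal : 2 ≤ s → letter w (s - 1) ≠ letter w (s - 1 + p)
  right_maximal : e < w.length → letter w (e + 1 - p) ≠ letter w (e + 1)

section Rmap

variable {w : List Bool} {i k s e p : ℕ}

theorem isMaximalPeriodic_Rmap (hk1 : 1 ≤ k) (hk2 : k ≤ w.length) :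
    IsMaximalPeriodic w (STpar w k) (Epar w k) (Dpar w k) := by
  have hL := le_Lpar hk1 hk2
  obtain ⟨⟨hST1, hSTper⟩, hSTmin⟩ := isLeast_STpar hk1 hk2
  obtain ⟨⟨hEn, hEper⟩, hEmax⟩ := isGreatest_Epar hk1 hk2
  have hSTk : STpar w k ≤ k := hSTmin ⟨hk1, periodicOn_Lpar k⟩
  have hLE : Lpar w k ≤ Epar w k := hEmax ⟨(isGreatest_Lpar hk1 hk2).1.1, periodicOn_Lpar k⟩
  have hD : Dpar w k = Lpar w k + 1 - k := rfl
  refine ⟨hST1, by omega, hEn, hSTper.glue hEper (by omega), fun hs2 heq => ?_,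
    fun hlt heq => ?_⟩
  · have hext : PeriodicOn w (STpar w k - 1) (Lpar w k) (Dpar w k) := fun x hx hxD => by
      rcases hx.lt_or_eq with hx | rfl
      · exact hSTper x (by omega) hxD
      · exact heq
    have := hSTmin ⟨by omega, hext⟩
    omega
  · have hext : PeriodicOn w k (Epar w k + 1) (Dpar w k) := fun x hx hxD => by
      by_cases h : x + Dpar w k ≤ Epar w k
      · exact hEper x hx h
      · rwa [show x = Epar w k + 1 - Dpar w k by omega, Nat.sub_add_cancel (by omega)]
    have := hEmax ⟨hlt, hext⟩
    omega

theorem Dpar_eq_of_isLeastPeriod (hk1 : 1 ≤ k) (hk2 : k ≤ w.length)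
    (hp : IsLeastPeriod (factor w (STpar w k) (Epar w k)) p) : Dpar w k = p := by
  have hM := isMaximalPeriodic_Rmap hk1 hk2
  obtain ⟨hLn, hLyn⟩ := (isGreatest_Lpar hk1 hk2).1
  have hp1 := hp.1.1
  have hpD : p ≤ Dpar w k :=
    hp.2 _ ((isPeriod_factor_iff_s9 hM.one_le_start hM.end_le_length).2
      ⟨hM.period_pos, hM.periodicOn⟩)
  have hper := ((isPeriod_factor_iff_s9 hM.one_le_start hM.end_le_length).1 hp.1).2.mono
    ((isLeast_STpar hk1 hk2).2 ⟨hk1, periodicOn_Lpar k⟩)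
    ((isGreatest_Epar hk1 hk2).2 ⟨hLn, periodicOn_Lpar k⟩)
  have hDp := hLyn.length_le_of_isPeriod ((isPeriod_factor_iff_s9 hk1 hLn).2 ⟨hp1, hper⟩)
  rw [length_factor_s9 hk1 hLn] at hDp
  exact le_antisymm hDp hpD

namespace IsMaximalPeriodic

theorem Rmap_eq_of_Lpar_eq (hM : IsMaximalPeriodic w s e p) (hsi : s ≤ i)
    (hipe : i + p ≤ e + 1) (hL : Lpar w i = i + p - 1) : Rmap w i = (s, e) := by
  have hi : 1 ≤ i := hM.one_le_start.trans hsi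
  have h2 : i ≤ w.length := by have := hM.end_le_length; have := hM.period_pos; omega
  have hD : Dpar w i = p := by rw [Dpar, hL]; omega
  have hE : Epar w i = e := by
    refine (isGreatest_Epar hi h2).unique
      ⟨⟨hM.end_le_length, hD ▸ hM.periodicOn.mono hsi le_rfl⟩, fun j ⟨hj, hper⟩ => ?_⟩
    by_contra! hej
    rw [hD] at hper
    exact hM.right_maximal (by omega)
      (by simpa [show e + 1 - p + p = e + 1 by omega] using hper (e + 1 - p) (by omega) (by omega))
  have hST : STpar w i = s := by
    refine (isLeast_STpar hi h2).unique ⟨⟨hM.one_le_start,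
      by rw [hD, hL]; exact hM.periodicOn.mono le_rfl (by omega)⟩, fun j ⟨hj, hper⟩ => ?_⟩
    by_contra! hjs
    rw [hD, hL] at hper
    exact hM.left_maximal (by omega) (hper (s - 1) (by omega) (by omega))
  rw [Rmap, hST, hE]

theorem Lpar_eq_of_isLyndon (hM : IsMaximalPeriodic w s e p) (hsi : s ≤ i)
    (hipe : i + p ≤ e + 1) (hLyn : IsLyndon (cpar w i) (factor w i (i + p - 1)))
    (hext : e < w.length → letter w (e + 1) = cpar w i) : Lpar w i = i + p - 1 := by
  have hi : 1 ≤ i := hM.one_le_start.trans hsi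
  have hen := hM.end_le_length
  have hp := hM.period_pos
  have hper : PeriodicOn w i e p := hM.periodicOn.mono hsi le_rfl
  refine (isGreatest_Lpar hi (by omega)).unique
    ⟨⟨by omega, hLyn⟩, fun j ⟨hj, hjLyn⟩ => ?_⟩
  by_contra! hjp
  by_cases hje : j ≤ e
  · have := hjLyn.length_le_of_isPeriod
      ((isPeriod_factor_iff_s9 hi hj).2 ⟨hp, hper.mono le_rfl hje⟩)
    rw [length_factor_s9 hi hj] at this
    omega
  · have hc := hext (by omega)
    refine hper.not_isLyndon_factor hi hp hipe (by omega) hj ?_ hc hjLyn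
    exact Bool.eq_not.2 (hc ▸ hM.right_maximal (by omega))

theorem letter_succ_eq_cpar_of_Lpar_eq (hM : IsMaximalPeriodic w s e p) (hsi : s ≤ i)
    (hipe : i + p ≤ e + 1) (he : e < w.length) (hL : Lpar w i = i + p - 1) :
    letter w (e + 1) = cpar w i := by
  have hi : 1 ≤ i := hM.one_le_start.trans hsi
  have hp := hM.period_pos
  by_contra hne
  have hLyn := (isGreatest_Lpar (w := w) hi (by omega)).1.2
  rw [hL] at hLyn
  have hroot : letter w (e + 1 - p) = cpar w i := by
    have := hM.right_maximal he
    rw [Bool.eq_not.2 hne] at this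
    simpa using Bool.eq_not.2 this
  have hlong := (hM.periodicOn.mono hsi le_rfl).isLyndon_factor_succ hi hipe he hLyn hroot
    (Bool.eq_not.2 hne)
  have := (isGreatest_Lpar hi (by omega)).2 ⟨he, hlong⟩
  omega

theorem Rmap_eq_iff (hM : IsMaximalPeriodic w s e p) (hp : IsLeastPeriod (factor w s e) p)
    (hi : 1 ≤ i) (h2 : i ≤ w.length) :
    Rmap w i = (s, e) ↔ s ≤ i ∧ i + p ≤ e + 1 ∧
      IsLyndon (cpar w i) (factor w i (i + p - 1)) ∧
      (e < w.length → letter w (e + 1) = cpar w i) := by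
  refine ⟨fun hR => ?_, fun ⟨hsi, hipe, hLyn, hext⟩ =>
    hM.Rmap_eq_of_Lpar_eq hsi hipe (hM.Lpar_eq_of_isLyndon hsi hipe hLyn hext)⟩
  obtain ⟨hST, hE⟩ := Prod.mk.inj hR
  have hD : Dpar w i = p := Dpar_eq_of_isLeastPeriod hi h2 (by rwa [hST, hE])
  have hL : Lpar w i = i + p - 1 := by have := le_Lpar hi h2; rw [Dpar] at hD; omega
  obtain ⟨⟨hLn, hLyn⟩, -⟩ := isGreatest_Lpar hi h2
  have hsi : s ≤ i := hST ▸ (isLeast_STpar hi h2).2 ⟨hi, periodicOn_Lpar i⟩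
  have hLE : Lpar w i ≤ e := hE ▸ (isGreatest_Epar hi h2).2 ⟨hLn, periodicOn_Lpar i⟩
  have hipe : i + p ≤ e + 1 := by have := hM.period_pos; omega
  exact ⟨hsi, hipe, hL ▸ hLyn, fun he => hM.letter_succ_eq_cpar_of_Lpar_eq hsi hipe he hL⟩

theorem cpar_eq_of_isLyndon (hM : IsMaximalPeriodic w s e p) (hsi : s < i)
    (hipe : i + p ≤ e + 1) (hp2 : 2 ≤ p) {c : Bool}
    (hLyn : IsLyndon c (factor w i (i + p - 1))) : cpar w i = c := by
  have hi : 1 ≤ i := by have := hM.one_le_start; omega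
  have hb : i + p - 1 ≤ w.length := by have := hM.end_le_length; omega
  have hlast := hLyn.getElem?_length_sub_one (by rw [length_factor_s9 hi hb]; omega)
  rw [length_factor_s9 hi hb, getElem?_factor_s9 hi hb (by omega)] at hlast
  rw [cpar_eq_not_letter, hM.periodicOn (i - 1) (by omega) (by omega),
    show i - 1 + p = i + (i + p - 1 + 1 - i - 1) by omega, Option.some.inj hlast, Bool.not_not]

theorem isLyndon_cpar (hM : IsMaximalPeriodic w s e p) (hsi : s < i)
    (hipe : i + p ≤ e + 1) {c : Bool} (hLyn : IsLyndon c (factor w i (i + p - 1))) :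
    IsLyndon (cpar w i) (factor w i (i + p - 1)) := by
  rcases (Nat.one_le_iff_ne_zero.2 hM.period_pos.ne').eq_or_lt with rfl | hp2
  · rw [show i + 1 - 1 = i by omega, factor_self (by omega) (by have := hM.end_le_length; omega)]
    exact isLyndon_singleton _ _
  · rwa [hM.cpar_eq_of_isLyndon hsi hipe hp2 hLyn]

theorem letter_succ_eq_cpar_of_isLyndon (hM : IsMaximalPeriodic w s e p) (hsi : s < i)
    (hipe : i + p ≤ e + 1) (he : e < w.length)
    (hLyn : IsLyndon (letter w (e + 1)) (factor w i (i + p - 1))) :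
    letter w (e + 1) = cpar w i := by
  rcases (Nat.one_le_iff_ne_zero.2 hM.period_pos.ne').eq_or_lt with rfl | hp2
  · have hmax := hM.right_maximal he
    rw [Nat.add_sub_cancel, ← hM.periodicOn.letter_eq_of_dvd (x := i - 1) (by omega) (by omega)
      le_rfl (one_dvd _)] at hmax
    rw [cpar_eq_not_letter, Bool.eq_not.2 hmax.symm]
  · exact (hM.cpar_eq_of_isLyndon hsi hipe hp2 hLyn).symm

/-- At `i = s` the left maximality makes the last letter of `w[s..s+p-1]` equal to
`c_w(s)`, which a `≺_{c_w(s)}`-Lyndon word of length at least two cannot end with. -/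
theorem period_eq_one_and_end_eq_length (hM : IsMaximalPeriodic w s e p) (hs : 1 < s)
    (hspe : s + p ≤ e + 1) (hLyn : IsLyndon (cpar w s) (factor w s (s + p - 1)))
    (hext : e < w.length → letter w (e + 1) = cpar w s) : p = 1 ∧ e = w.length := by
  have hp := hM.period_pos
  have hb : s + p - 1 ≤ w.length := by have := hM.end_le_length; omega
  have hlast : letter w (s + p - 1) = cpar w s := by
    rw [cpar_eq_not_letter, show s + p - 1 = s - 1 + p by omega]
    exact Bool.eq_not.2 (hM.left_maximal hs).symm
  have hp1 : p = 1 := by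
    by_contra hp1
    have := hLyn.getElem?_length_sub_one (by rw [length_factor_s9 (by omega) hb]; omega)
    rw [length_factor_s9 (by omega) hb, getElem?_factor_s9 (by omega) hb (by omega),
      show s + (s + p - 1 + 1 - s - 1) = s + p - 1 by omega, hlast] at this
    simp at this
  subst hp1
  refine ⟨rfl, hM.end_le_length.eq_or_lt.resolve_right fun he => hM.right_maximal he ?_⟩
  rw [hext he, ← hlast]
  simp only [Nat.add_sub_cancel]
  exact (hM.periodicOn.letter_eq_of_dvd le_rfl (by omega) le_rfl (one_dvd _)).symm

end IsMaximalPeriodic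

theorem isMaximalPeriodic_of_Rmap_eq (hk1 : 1 ≤ k) (hk2 : k ≤ w.length)
    (hR : Rmap w k = (s, e)) (hp : IsLeastPeriod (factor w s e) p) :
    IsMaximalPeriodic w s e p := by
  obtain ⟨hST, hE⟩ := Prod.mk.inj hR
  have hM := isMaximalPeriodic_Rmap hk1 hk2
  rwa [hST, hE, Dpar_eq_of_isLeastPeriod hk1 hk2 (by rwa [hST, hE])] at hM

end Rmap

/-- Characterization of the preimages of an interval `[s..e]` in the range
of `R_w`. -/
theorem Rmap_preimage_characterization (w : List Bool) (s e p : ℕ)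
    (hrange : ∃ k, 1 < k ∧ k ≤ w.length ∧ Rmap w k = (s, e))
    (hp : IsLeastPeriod (factor w s e) p)
    (i : ℕ) (h1 : 1 < i) (h2 : i ≤ w.length) :
    Rmap w i = (s, e) ↔
      (e < w.length ∧ s < i ∧ i + p ≤ e + 1 ∧
        IsLyndon (w.getD e false) (factor w i (i + p - 1))) ∨
      (e = w.length ∧ s < i ∧ i + p ≤ e + 1 ∧
        (IsLyndon false (factor w i (i + p - 1)) ∨
         IsLyndon true (factor w i (i + p - 1)))) ∨
      (s = i ∧ e = w.length ∧ IsPeriod (factor w i e) 1) := by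
  obtain ⟨k, hk1, hk2, hRk⟩ := hrange
  have hM := isMaximalPeriodic_of_Rmap_eq hk1.le hk2 hRk hp
  rw [hM.Rmap_eq_iff hp h1.le h2, getD_eq_letter]
  constructor
  · rintro ⟨hsi, hipe, hLyn, hext⟩
    rcases hsi.lt_or_eq with hsi | rfl
    · rcases hM.end_le_length.lt_or_eq with he | he
      · exact Or.inl ⟨he, hsi, hipe, by rwa [hext he]⟩
      · exact Or.inr (Or.inl ⟨he, hsi, hipe, by cases h : cpar w i <;> simp_all⟩)
    · obtain ⟨rfl, he⟩ := hM.period_eq_one_and_end_eq_length h1 hipe hLyn hext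
      exact Or.inr (Or.inr ⟨rfl, he, (isPeriod_factor_iff_s9 hM.one_le_start hM.end_le_length).2
        ⟨le_rfl, hM.periodicOn⟩⟩)
  · rintro (⟨he, hsi, hipe, hLyn⟩ | ⟨he, hsi, hipe, hLyn | hLyn⟩ | ⟨rfl, he, hper⟩)
    · have hc := hM.letter_succ_eq_cpar_of_isLyndon hsi hipe he hLyn
      exact ⟨hsi.le, hipe, hc ▸ hLyn, fun _ => hc⟩
    · exact ⟨hsi.le, hipe, hM.isLyndon_cpar hsi hipe hLyn, fun h => absurd he h.ne⟩
    · exact ⟨hsi.le, hipe, hM.isLyndon_cpar hsi hipe hLyn, fun h => absurd he h.ne⟩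
    · obtain rfl : p = 1 := le_antisymm (hp.2 1 hper) hM.period_pos
      refine ⟨le_rfl, by omega, ?_, fun h => absurd he h.ne⟩
      rw [Nat.add_sub_cancel, factor_self h1.le h2]
      exact isLyndon_singleton _ _
end

section
/- For every binary word y of length n ≥ 2, the number of runs of y of the form [1..j] (runs starting at the first position of y) is strictly less than log_φ n, where φ = (1+√5)/2 is the golden ratio. (Any two distinct runs of y starting at position 1 give prefix squares of y whose primitive roots are distinct.) -/
/-!
The runs `[1..J]` of `y` are ordered in the same way by their ends `J` and by their least periods
`p`, by maximality. For three of them with periods `p < q < r` one has `p + q ≤ r`: otherwise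
repeated use of the Fine–Wilf theorem produces a period of `y[1..J_p]` that divides `p` and is
smaller than `p`. Hence the `i`-th smallest period is at least the Fibonacci number `F (i + 2)`,
and the longest run gives `n ≥ 2 F (k + 1) > φ ^ k` when there are `k` runs.
-/

def HasPeriodBelow {β : Type*} (f : ℕ → β) (m p : ℕ) : Prop :=
  ∀ k, k + p < m → f k = f (k + p)

namespace HasPeriodBelow

variable {β : Type*} {f : ℕ → β} {m m' p q g x : ℕ}

theorem mono (h : HasPeriodBelow f m p) (hm : m' ≤ m) : HasPeriodBelow f m' p :=
  fun k hk => h k (by omega)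

theorem sub (hp : HasPeriodBelow f m p) (hq : HasPeriodBelow f m q) (hpq : p ≤ q) :
    HasPeriodBelow f (m - p) (q - p) := fun k hk => by
  have h := hp (k + (q - p)) (by omega)
  rw [show k + (q - p) + p = k + q by omega] at h
  rw [h, hq k (by omega)]

theorem iff_hasPeriod_map_range :
    HasPeriodBelow f m p ↔ ((List.range m).map f).HasPeriod p := by
  rw [List.hasPeriod_iff_getElem?]
  simp only [List.length_map, List.length_range, List.getElem?_map]
  constructor
  · intro h i hi
    rw [List.getElem?_range (by omega), List.getElem?_range (by omega), Option.map_some,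
      Option.map_some, h i (by omega)]
  · intro h k hk
    have := h k (by omega)
    rwa [List.getElem?_range (by omega), List.getElem?_range hk, Option.map_some,
      Option.map_some, Option.some_inj] at this

theorem gcd (hp : HasPeriodBelow f m p) (hq : HasPeriodBelow f m q)
    (hm : p + q - p.gcd q ≤ m) : HasPeriodBelow f m (p.gcd q) := by
  rw [iff_hasPeriod_map_range] at *
  exact hp.gcd hq (by simpa using hm)

theorem apply_mod (h : HasPeriodBelow f m p) (hx : x < m) : f (x % p) = f x := by
  induction x using Nat.strong_induction_on with
  | _ x ih =>
    rcases lt_or_ge x p with hxp | hpx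
    · rw [Nat.mod_eq_of_lt hxp]
    · obtain rfl | hp := Nat.eq_zero_or_pos p
      · rw [Nat.mod_zero]
      rw [Nat.mod_eq_sub_mod hpx, ih (x - p) (by omega) (by omega), h (x - p) (by omega),
        Nat.sub_add_cancel hpx]

theorem of_dvd (hm : HasPeriodBelow f m p) (hp : 0 < p) (hg : HasPeriodBelow f p g)
    (hgp : g ∣ p) : HasPeriodBelow f m g := fun k hk => by
  rw [← hm.apply_mod (x := k) (by omega), ← hm.apply_mod hk, ← hg.apply_mod (Nat.mod_lt _ hp),
    ← hg.apply_mod (Nat.mod_lt _ hp), Nat.mod_mod_of_dvd _ hgp, Nat.mod_mod_of_dvd _ hgp,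
    Nat.add_mod_right]

end HasPeriodBelow

/-- A run `[1..J]` with least period `p`, read off the letter function `f` with 0-based indices.
Maximality on the right is `f J ≠ f (J - p)`; for `f = (y[·]?)` this also covers `J = |y|`,
where `y[J]? = none`. -/
structure IsPrefixRun {β : Type*} (f : ℕ → β) (p J : ℕ) : Prop where
  pos : 0 < p
  two_mul_le : 2 * p ≤ J
  hasPeriodBelow : HasPeriodBelow f J p
  le_of_hasPeriodBelow : ∀ q, 0 < q → HasPeriodBelow f J q → p ≤ q
  apply_ne : f J ≠ f (J - p)

namespace IsPrefixRun

variable {β : Type*} {f : ℕ → β} {p q r g Jp Jq Jr : ℕ}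

theorem lt_of_period_lt (hp : IsPrefixRun f p Jp) (hq : IsPrefixRun f q Jq) (hpq : p < q) :
    Jp < Jq := by
  by_contra! h
  have := hq.le_of_hasPeriodBelow p hp.pos (hp.hasPeriodBelow.mono h)
  omega

theorem period_lt_of_lt (hp : IsPrefixRun f p Jp) (hq : IsPrefixRun f q Jq) (hJ : Jp < Jq) :
    p < q := by
  rcases lt_trichotomy p q with h | rfl | h
  · exact h
  · have := hq.hasPeriodBelow (Jp - p) (by have := hp.two_mul_le; omega)
    rw [Nat.sub_add_cancel (by have := hp.two_mul_le; omega)] at this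
    exact absurd this.symm hp.apply_ne
  · exact absurd (hq.lt_of_period_lt hp h) (by omega)

theorem le_of_hasPeriodBelow_of_dvd (hp : IsPrefixRun f p Jp) (hg : HasPeriodBelow f p g)
    (hg0 : 0 < g) (hgp : g ∣ p) : p ≤ g :=
  hp.le_of_hasPeriodBelow g hg0 (hp.hasPeriodBelow.of_dvd hp.pos hg hgp)

theorem add_le (hp : IsPrefixRun f p Jp) (hq : IsPrefixRun f q Jq) (hr : IsPrefixRun f r Jr)
    (hpq : p < q) (hqr : q < r) : p + q ≤ r := by
  -- Otherwise `s := r - q < p`, and Fine–Wilf, applied twice, yields a period of `f` below `Jp`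
  -- that divides `p` and is smaller than `p`.
  by_contra! hlt
  have hJpq := hp.lt_of_period_lt hq hpq
  have hJqr := hq.lt_of_period_lt hr hqr
  have := hp.two_mul_le
  have := hq.two_mul_le
  set m := Jq - q
  set s := r - q
  have hs : HasPeriodBelow f m s :=
    hq.hasPeriodBelow.sub (hr.hasPeriodBelow.mono hJqr.le) hqr.le
  have hmJp : m < Jp := by
    by_contra! h
    have := hp.le_of_hasPeriodBelow s (by omega) (hs.mono h)
    omega
  have hmp : m < p + s := by
    by_contra! h
    have hg := (hp.hasPeriodBelow.mono hmJp.le).gcd hs (by omega)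
    have := hp.le_of_hasPeriodBelow_of_dvd (hg.mono (by omega))
      (Nat.gcd_pos_of_pos_left _ hp.pos) (Nat.gcd_dvd_left _ _)
    have := Nat.le_of_dvd (by omega) (Nat.gcd_dvd_right p s)
    omega
  set d := q - p
  set e := p - s
  have hd : HasPeriodBelow f (Jp - p) d :=
    hp.hasPeriodBelow.sub (hq.hasPeriodBelow.mono hJpq.le) hpq.le
  have he : HasPeriodBelow f (m - s) e := hs.sub (hp.hasPeriodBelow.mono hmJp.le) (by omega)
  have hA : HasPeriodBelow f (m - s) (d.gcd e) := (hd.mono (by omega)).gcd he (by omega)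
  have hAp : HasPeriodBelow f p (d.gcd e) :=
    (hd.mono (by omega)).of_dvd (by omega) (hA.mono (by omega)) (Nat.gcd_dvd_left _ _)
  have hAe := Nat.le_of_dvd (by omega) (Nat.gcd_dvd_right d e)
  have hG := hAp.gcd (hs.mono (by omega)) (by omega)
  have hGp : (d.gcd e).gcd s ∣ p := by
    have := Nat.dvd_add ((Nat.gcd_dvd_left _ _).trans (Nat.gcd_dvd_right d e))
      (Nat.gcd_dvd_right _ s)
    rwa [show e + s = p by omega] at this
  have := hp.le_of_hasPeriodBelow_of_dvd hG (Nat.gcd_pos_of_pos_right _ (by omega)) hGp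
  have := Nat.le_of_dvd (by omega) (Nat.gcd_dvd_right (d.gcd e) s)
  omega

end IsPrefixRun

theorem Nat.fib_add_two_le_of_add_le {g : ℕ → ℕ} {k : ℕ} (h0 : 0 < g 0)
    (hlt : ∀ i, i + 1 < k → g i < g (i + 1))
    (hadd : ∀ i, i + 2 < k → g i + g (i + 1) ≤ g (i + 2)) :
    ∀ i < k, Nat.fib (i + 2) ≤ g i := by
  intro i
  induction i using Nat.strong_induction_on with
  | _ i ih =>
    match i with
    | 0 => exact fun _ => h0
    | 1 => exact fun hk => (hlt 0 hk).trans_le' h0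
    | i + 2 =>
      intro hk
      have h1 : Nat.fib (i + 2) ≤ g i := ih i (by omega) (by omega)
      have h2 : Nat.fib (i + 2 + 1) ≤ g (i + 1) := ih (i + 1) (by omega) (by omega)
      rw [Nat.fib_add_two]
      exact (Nat.add_le_add h1 h2).trans (hadd i hk)

theorem Real.goldenRatio_pow_lt_two_mul_fib (n : ℕ) : goldenRatio ^ n < 2 * Nat.fib (n + 1) := by
  have hfib : (Nat.fib n : ℝ) ≤ Nat.fib (n + 1) := mod_cast Nat.fib_le_fib_succ
  have hpos : (0 : ℝ) < Nat.fib (n + 1) := mod_cast Nat.fib_pos.mpr n.succ_pos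
  have := Real.neg_one_lt_goldenConj
  have := Real.goldenConj_neg
  rw [← Real.fib_succ_sub_goldenConj_mul_fib]
  nlinarith

theorem exists_two_mul_fib_ncard_le_of_isPrefixRun {β : Type*} {f : ℕ → β} {S : Set ℕ}
    (hS : S.Finite) (hne : S.Nonempty) (P : ℕ → ℕ)
    (hrun : ∀ J ∈ S, IsPrefixRun f (P J) J) :
    ∃ J ∈ S, 2 * Nat.fib (S.ncard + 1) ≤ J := by
  set k := S.ncard with hk
  rw [Set.ncard_eq_toFinset_card S hS] at hk
  have hk0 : 0 < k := (Set.ncard_pos hS).mpr hne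
  set J := Nat.nth (· ∈ S)
  have hJS : ∀ i < k, J i ∈ S := fun i hi => Nat.nth_mem_of_lt_card hS (hk ▸ hi)
  have hJlt : ∀ i, i + 1 < k → J i < J (i + 1) := fun i hi =>
    Nat.nth_lt_nth_of_lt_card hS (Nat.lt_succ_self i) (hk ▸ hi)
  have hPlt : ∀ i, i + 1 < k → P (J i) < P (J (i + 1)) := fun i hi =>
    (hrun _ (hJS i (by omega))).period_lt_of_lt (hrun _ (hJS _ hi)) (hJlt i hi)
  have hfib := Nat.fib_add_two_le_of_add_le (g := fun i => P (J i))
    (hrun _ (hJS 0 hk0)).pos hPlt fun i hi =>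
      (hrun _ (hJS i (by omega))).add_le (hrun _ (hJS _ (by omega))) (hrun _ (hJS _ hi))
        (hPlt i (by omega)) (hPlt (i + 1) hi)
  refine ⟨J (k - 1), hJS _ (by omega), ?_⟩
  calc 2 * Nat.fib (k + 1) = 2 * Nat.fib (k - 1 + 2) := by rw [show k - 1 + 2 = k + 1 by omega]
    _ ≤ 2 * P (J (k - 1)) := by gcongr; exact hfib _ (by omega)
    _ ≤ J (k - 1) := (hrun _ (hJS _ (by omega))).two_mul_le

theorem isPeriod_take_iff {y : List Bool} {J p : ℕ} (hJ : J ≤ y.length) :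
    IsPeriod (y.take J) p ↔ 1 ≤ p ∧ HasPeriodBelow (y[·]?) J p := by
  unfold IsPeriod HasPeriodBelow
  rw [List.length_take_of_le hJ]
  refine and_congr_right fun _ => forall_congr' fun k => imp_congr_right fun hk => ?_
  rw [List.getElem?_take_of_lt (by omega), List.getElem?_take_of_lt hk]

theorem isPrefixRun_of_isRun {y : List Bool} {J : ℕ} (h : IsRun y 1 J) :
    IsPrefixRun (y[·]?) (leastPeriod (factor y 1 J)) J := by
  obtain ⟨-, hJ1, hJy, htwo, -, hmax⟩ := h
  rw [show factor y 1 J = y.take J by simp [factor]] at htwo hmax ⊢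
  have hper : IsPeriod (y.take J) (leastPeriod (y.take J)) :=
    Nat.sInf_mem (s := {p | IsPeriod (y.take J) p})
      ⟨J, (isPeriod_take_iff hJy).mpr ⟨by omega, fun k hk => by omega⟩⟩
  rw [isPeriod_take_iff hJy] at hper
  refine ⟨hper.1, by omega, hper.2,
    fun q hq hqper => Nat.sInf_le ((isPeriod_take_iff hJy).mpr ⟨hq, hqper⟩), ?_⟩
  rcases hmax with rfl | hne
  · rw [List.getElem?_eq_none le_rfl, List.getElem?_eq_getElem (by omega)]
    exact nofun
  · exact hne

/-- A word of length `n ≥ 2` has fewer than `log_φ n` runs starting at its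
first position. -/
theorem prefix_runs_lt_log (y : List Bool) (h : 2 ≤ y.length) :
    ({j : ℕ | IsRun y 1 j}.ncard : ℝ) < Real.logb goldenRatio' y.length := by
  set S := {j : ℕ | IsRun y 1 j}
  have hS : S.Finite := (Set.finite_Iic y.length).subset fun j hj => hj.2.2.1
  have hfib : 2 * Nat.fib (S.ncard + 1) ≤ y.length := by
    rcases S.eq_empty_or_nonempty with hempty | hne
    · simpa [hempty] using h
    obtain ⟨J, hJ, hfibJ⟩ :=
      exists_two_mul_fib_ncard_le_of_isPrefixRun hS hne _ fun J hJ => isPrefixRun_of_isRun hJ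
    exact hfibJ.trans hJ.2.2.1
  rw [show goldenRatio' = Real.goldenRatio from rfl,
    Real.lt_logb_iff_rpow_lt Real.one_lt_goldenRatio (by positivity), Real.rpow_natCast]
  exact (Real.goldenRatio_pow_lt_two_mul_fib _).trans_le (mod_cast hfib)
end
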